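/- arXiv:2304.13715 — 6 statements merged into one kernel-verified Lean document; each statement's English description precedes it below -/
import Mathlib

section
/- Let Δ be a positive integer, let H be a bipartite graph with maximum degree Δ(H) ≤ Δ, let G be a graph and let X ⊊ V(G) be such that every vertex v ∈ V(G)∖X has degree at least |V(H)| − 1 in G. If |V(G)| ≤ (1 + 1/(4Δ(Δ+1)))·|V(H)| − 1 and |X| ≤ |V(H)|/((Δ+1)(Δ²+1)), then H is isomorphic to a subgraph of G. -/
/-!
Let `s = |V(G)| - |V(H)|`, so every vertex outside `X` misses at most `s` other vertices. Split `H`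
into colour classes `P` and `Q` with `|Q| ≤ |V(H)|/2`. Discard the `s` vertices of `X` with the most
non-neighbours outside `X` and map onto the remaining ones a set `T ⊆ P` of vertices with pairwise
no common neighbour. Then embed `Q` into `V(G) ∖ X` by Hall's theorem, sending each `q` with a
neighbour in `T` (unique by the choice of `T`) next to that neighbour's image: averaging over the
discarded vertices together with any `k ≤ s` kept ones yields a kept vertex with `Δ k` neighbours
outside `X`, while more than `s` kept vertices dominate `V(G) ∖ X`. Finally embed `P ∖ T` into the
unused vertices outside `X`, again by Hall: each vertex of `P ∖ T` rules out at most `Δ s` of them,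
and each of them is ruled out by at most `Δ s` vertices of `P ∖ T`.
-/

open SimpleGraph

/-- The degree of a vertex: the number of neighbours. -/
noncomputable def deg {V : Type*} (G : SimpleGraph V) (v : V) : ℕ :=
  (G.neighborSet v).ncard

/-- The minimum degree of a graph. -/
noncomputable def minDeg {V : Type*} (G : SimpleGraph V) : ℕ :=
  sInf (Set.range (deg G))

/-- The maximum degree of a graph. -/
noncomputable def maxDeg {V : Type*} (G : SimpleGraph V) : ℕ :=
  sSup (Set.range (deg G))

/-- The density of a graph: number of edges divided by number of vertices. -/
noncomputable def density {V : Type*} (G : SimpleGraph V) : ℝ :=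
  (G.edgeSet.ncard : ℝ) / (Nat.card V : ℝ)

/-- The density of a subgraph of `G`. -/
noncomputable def subDensity {V : Type*} {G : SimpleGraph V} (J : G.Subgraph) : ℝ :=
  (J.edgeSet.ncard : ℝ) / (J.verts.ncard : ℝ)

/-- A model (branch decomposition) of `H` in `G`: pairwise disjoint branch sets,
each inducing a connected (in particular nonempty) subgraph, with an edge of `G`
between the branch sets of any two adjacent vertices of `H`. -/
def IsModel {α β : Type*} (H : SimpleGraph α) (G : SimpleGraph β) (μ : α → Set β) : Prop :=
  (∀ u v : α, u ≠ v → Disjoint (μ u) (μ v)) ∧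
  (∀ v : α, (G.induce (μ v)).Connected) ∧
  (∀ u v : α, H.Adj u v → ∃ a ∈ μ u, ∃ b ∈ μ v, G.Adj a b)

/-- `H` is a minor of `G`: there is a model of `H` in `G`. -/
def IsMinor {α β : Type*} (H : SimpleGraph α) (G : SimpleGraph β) : Prop :=
  ∃ μ : α → Set β, IsModel H G μ

/-- `H` is isomorphic to a subgraph of `G`. -/
def IsSubgraphEmb {α β : Type*} (H : SimpleGraph α) (G : SimpleGraph β) : Prop :=
  ∃ f : α ↪ β, ∀ u v : α, H.Adj u v → G.Adj (f u) (f v)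

/-- A (proper) separation of `G`. -/
def IsSeparation {V : Type*} (G : SimpleGraph V) (A B : Set V) : Prop :=
  A ∪ B = Set.univ ∧ ¬ A ⊆ B ∧ ¬ B ⊆ A ∧
    ∀ u ∈ A \ B, ∀ v ∈ B \ A, ¬ G.Adj u v

/-- The pair `(G, X)` is `k`-dense: `X` is a proper subset of the vertices, and for
every separation of order at most `k` one of the two sides is contained in `X`. -/
def KDense {V : Type*} (G : SimpleGraph V) (X : Set V) (k : ℝ) : Prop :=
  X ≠ Set.univ ∧
  ∀ A B : Set V, IsSeparation G A B → ((A ∩ B).ncard : ℝ) ≤ k →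
    A \ B ⊆ X ∨ B \ A ⊆ X

/-- The pair `(G, X)` is `(d, k)`-dense. -/
def DensePair {V : Type*} (G : SimpleGraph V) (X : Set V) (d k : ℝ) : Prop :=
  X ≠ Set.univ ∧
  (∀ v : V, v ∉ X → d ≤ (deg G v : ℝ)) ∧
  ∀ A B : Set V, IsSeparation G A B → ((A ∩ B).ncard : ℝ) ≤ k →
    A \ B ⊆ X ∨ B \ A ⊆ X

/-- A graph family (of finite graphs, represented on the vertex sets `Fin n`) with
strongly sublinear separators: closed under subgraphs, and there are `c > 0` and
`0 < β < 1` such that every member has a balanced separation of order ≤ `c * n ^ β`. -/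
def SSLS (F : ∀ n : ℕ, SimpleGraph (Fin n) → Prop) : Prop :=
  (∀ (n m : ℕ) (G : SimpleGraph (Fin n)) (H : SimpleGraph (Fin m)),
      F n G → IsSubgraphEmb H G → F m H) ∧
  ∃ c : ℝ, 0 < c ∧ ∃ β : ℝ, 0 < β ∧ β < 1 ∧
    ∀ (n : ℕ) (G : SimpleGraph (Fin n)), F n G →
      ∃ A B : Set (Fin n), IsSeparation G A B ∧
        (A.ncard : ℝ) ≤ 2 / 3 * n ∧ (B.ncard : ℝ) ≤ 2 / 3 * n ∧
        ((A ∩ B).ncard : ℝ) ≤ c * (n : ℝ) ^ (β : ℝ)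

/-- The extremal function `c(H)`: the supremum of densities of non-null graphs
with no `H` minor. -/
noncomputable def extremalFunction {α : Type*} (H : SimpleGraph α) : ℝ :=
  sSup {x : ℝ | ∃ (n : ℕ) (G : SimpleGraph (Fin n)), 0 < n ∧ ¬ IsMinor H G ∧ density G = x}

/-- `G` is `H`-linked: `G` has at least as many vertices as `H` and every injection
`φ` of the vertices of `H` into those of `G` extends to a `φ`-rooted model of `H`. -/
def IsLinked {α β : Type*} (H : SimpleGraph α) (G : SimpleGraph β) : Prop :=
  Nat.card α ≤ Nat.card β ∧
  ∀ φ : α ↪ β, ∃ μ : α → Set β, IsModel H G μ ∧ ∀ v : α, φ v ∈ μ v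

/-- `H'` is obtained from `H` by a simple edge extension: adding a new vertex joined
by an edge to at most one vertex of `H`, or two new vertices joined by an edge. -/
def IsSimpleEdgeExt {α β : Type*} (H : SimpleGraph α) (H' : SimpleGraph β) : Prop :=
  ∃ f : α ↪ β,
    ((∃ x : β, x ∉ Set.range f ∧ (∀ y : β, y = x ∨ y ∈ Set.range f) ∧
       ((∀ u v : β, H'.Adj u v ↔ ∃ a b : α, u = f a ∧ v = f b ∧ H.Adj a b) ∨
        (∃ a : α, ∀ u v : β, H'.Adj u v ↔
          ((∃ a' b' : α, u = f a' ∧ v = f b' ∧ H.Adj a' b') ∨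
           (u = x ∧ v = f a) ∨ (v = x ∧ u = f a))))) ∨
     (∃ x y : β, x ≠ y ∧ x ∉ Set.range f ∧ y ∉ Set.range f ∧
       (∀ z : β, z = x ∨ z = y ∨ z ∈ Set.range f) ∧
       (∀ u v : β, H'.Adj u v ↔
         ((∃ a b : α, u = f a ∧ v = f b ∧ H.Adj a b) ∨
          (u = x ∧ v = y) ∨ (u = y ∧ v = x)))))

/-- `J` is a `k`-edge extension of `H`: obtained by a sequence of at most `k`
simple edge extensions (up to isomorphism). -/
def IsKEdgeExt {α β : Type*} (k : ℕ) (H : SimpleGraph α) (J : SimpleGraph β) : Prop :=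
  ∃ j : ℕ, j ≤ k ∧ ∃ c : ℕ → (Σ n : ℕ, SimpleGraph (Fin n)),
    Nonempty (H ≃g (c 0).2) ∧ Nonempty (J ≃g (c j).2) ∧
    ∀ i : ℕ, i < j → IsSimpleEdgeExt (c i).2 (c (i + 1)).2

/-- `G` is `(H + k)`-linked: `G` is `J`-linked for every `k`-edge extension `J` of `H`. -/
def IsPlusKLinked {α β : Type*} (H : SimpleGraph α) (k : ℕ) (G : SimpleGraph β) : Prop :=
  ∀ (m : ℕ) (J : SimpleGraph (Fin m)), IsKEdgeExt k H J → IsLinked J G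

-- The connectivity of `G`: the minimum order of a separation, except for complete
-- graphs, where it is the number of vertices minus one.
open scoped Classical in
noncomputable def connectivity {V : Type*} (G : SimpleGraph V) : ℕ :=
  if ∀ u v : V, u ≠ v → G.Adj u v then Nat.card V - 1
  else sInf {k : ℕ | ∃ A B : Set V, IsSeparation G A B ∧ (A ∩ B).ncard = k}

open Finset

theorem deg_eq_degree {V : Type*} [Fintype V] (G : SimpleGraph V) [DecidableRel G.Adj] (v : V) :
    deg G v = G.degree v := by
  rw [deg, ← card_neighborSet_eq_degree, Set.ncard_eq_toFinset_card', Set.toFinset_card]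

theorem Finset.exists_subset_card_eq_forall_le {β γ : Type*} [DecidableEq β] [LinearOrder γ]
    (f : β → γ) : ∀ {k : ℕ} {A : Finset β}, k ≤ #A →
      ∃ S ⊆ A, #S = k ∧ ∀ x ∈ S, ∀ y ∈ A \ S, f x ≤ f y := by
  intro k
  induction k with
  | zero => exact fun _ => ⟨∅, empty_subset _, rfl, by simp⟩
  | succ k ih =>
    intro A hA
    obtain ⟨x₀, hx₀, hmin⟩ := A.exists_min_image f (card_pos.mp (by omega))
    obtain ⟨S, hSA, hS, hSmin⟩ := ih (A := A.erase x₀) (by rw [card_erase_of_mem hx₀]; omega)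
    have hx₀S : x₀ ∉ S := fun h => (mem_erase.mp (hSA h)).1 rfl
    refine ⟨insert x₀ S, insert_subset hx₀ (hSA.trans (erase_subset _ _)), by
      rw [card_insert_of_notMem hx₀S, hS], ?_⟩
    intro x hx y hy
    obtain ⟨hyA, hyS⟩ := mem_sdiff.mp hy
    rcases mem_insert.mp hx with rfl | hx
    · exact hmin y hyA
    · refine hSmin x hx y (mem_sdiff.mpr ⟨mem_erase.mpr ⟨?_, hyA⟩, fun h => ?_⟩)
      exacts [fun h => hyS (h ▸ mem_insert_self _ _), hyS (mem_insert_of_mem h)]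

theorem Finset.exists_injOn_extend_of_hall {ι β : Type*} [DecidableEq ι] [DecidableEq β]
    {A B : Finset ι} (f₀ : ι → β) (hf₀ : Set.InjOn f₀ A) (t : ι → Finset β)
    (ht : ∀ i ∈ B \ A, ∀ j ∈ A, f₀ j ∉ t i) (hall : ∀ S ⊆ B \ A, #S ≤ #(S.biUnion t)) :
    ∃ f : ι → β, Set.InjOn f B ∧ Set.EqOn f f₀ A ∧ ∀ i ∈ B \ A, f i ∈ t i := by
  obtain ⟨g, hg, hgt⟩ := (all_card_le_biUnion_card_iff_exists_injective
    fun i : (B \ A : Finset ι) => t i).mp fun S => by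
      have := hall (S.map (Function.Embedding.subtype _)) fun i hi => by
        obtain ⟨j, -, rfl⟩ := mem_map.mp hi
        exact j.2
      rwa [card_map, map_eq_image, image_biUnion] at this
  refine ⟨fun i => if h : i ∈ B \ A then g ⟨i, h⟩ else f₀ i, ?_, fun i hi => ?_, fun i hi => ?_⟩
  · intro i hi j hj hij
    have hA : ∀ k ∈ B, k ∉ B \ A → k ∈ A := fun k hk hk' => by simpa [hk] using hk'
    by_cases hi' : i ∈ B \ A <;> by_cases hj' : j ∈ B \ A <;> simp only [hi', hj', dite_true,
      dite_false] at hij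
    · exact congrArg Subtype.val (hg hij)
    · exact absurd (hij ▸ hgt ⟨i, hi'⟩) (ht i hi' j (hA j hj hj'))
    · exact absurd (hij ▸ hgt ⟨j, hj'⟩) (ht j hj' i (hA i hi hi'))
    · exact hf₀ (hA i hi hi') (hA j hj hj') hij
  · simp [Finset.mem_coe.mp hi]
  · simpa [hi] using hgt ⟨i, hi⟩

theorem Finset.card_le_card_biUnion_sdiff {ι β : Type*} [DecidableEq β] {I S : Finset ι}
    {R : Finset β} {bad : ι → Finset β} {d : ℕ} (hbad : ∀ i ∈ I, #(bad i) ≤ d)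
    (hcol : ∀ b ∈ R, #{i ∈ I | b ∈ bad i} ≤ d) (hR : 2 * d ≤ #R) (hI : #I ≤ #R) (hS : S ⊆ I) :
    #S ≤ #(S.biUnion fun i => R \ bad i) := by
  obtain rfl | ⟨i, hi⟩ := S.eq_empty_or_nonempty
  · simp
  by_cases hsmall : #S + d ≤ #R
  · calc #S ≤ #R - #(bad i) := by have := hbad i (hS hi); omega
      _ ≤ #(R \ bad i) := le_card_sdiff _ _
      _ ≤ _ := card_le_card (subset_biUnion_of_mem (fun i => R \ bad i) hi)
  · have hRS : R ⊆ S.biUnion fun i => R \ bad i := by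
      intro b hb
      by_contra hnot
      have : S ⊆ {i ∈ I | b ∈ bad i} := fun j hj => mem_filter.mpr
        ⟨hS hj, by_contra fun h => hnot (mem_biUnion.mpr ⟨j, hj, mem_sdiff.mpr ⟨hb, h⟩⟩)⟩
      have := (card_le_card this).trans (hcol b hb)
      omega
    exact (card_le_card hS).trans (hI.trans (card_le_card hRS))

namespace SimpleGraph

variable {V : Type*}

theorem exists_isIndepSet_subset_card_eq [Fintype V] [DecidableEq V] (K : SimpleGraph V)
    [DecidableRel K.Adj] {d : ℕ} (hK : ∀ v, K.degree v ≤ d) :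
    ∀ {t : ℕ} {A : Finset V}, t * (d + 1) ≤ #A →
      ∃ T ⊆ A, #T = t ∧ K.IsIndepSet (T : Set V) := by
  intro t
  induction t with
  | zero => exact fun _ => ⟨∅, empty_subset _, rfl, by simp⟩
  | succ t ih =>
    intro A hA
    obtain ⟨p, hp⟩ : A.Nonempty := card_pos.mp (by nlinarith)
    have hclosed : #(insert p (K.neighborFinset p)) ≤ d + 1 :=
      (card_insert_le _ _).trans (by simpa using hK p)
    obtain ⟨T, hTA, hT, hTind⟩ := ih (A := A \ insert p (K.neighborFinset p)) (by
      have := le_card_sdiff (insert p (K.neighborFinset p)) A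
      rw [add_mul, one_mul] at hA
      omega)
    have hpT : p ∉ T := fun h => (mem_sdiff.mp (hTA h)).2 (mem_insert_self _ _)
    refine ⟨insert p T, insert_subset hp (hTA.trans sdiff_subset), by
      rw [card_insert_of_notMem hpT, hT], ?_⟩
    rw [coe_insert]
    refine hTind.insert fun q hq _ => ?_
    have hq' := (mem_sdiff.mp (hTA hq)).2
    rw [mem_insert, mem_neighborFinset, not_or] at hq'
    exact ⟨hq'.2, fun h => hq'.2 h.symm⟩

def sharesNeighbor (H : SimpleGraph V) : SimpleGraph V where
  Adj u v := u ≠ v ∧ ∃ w, H.Adj u w ∧ H.Adj v w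
  symm := ⟨fun _ _ h => ⟨h.1.symm, h.2.imp fun _ hw => hw.symm⟩⟩
  loopless := ⟨fun _ h => h.1 rfl⟩

instance (H : SimpleGraph V) [Fintype V] [DecidableEq V] [DecidableRel H.Adj] :
    DecidableRel H.sharesNeighbor.Adj :=
  fun _ _ => inferInstanceAs (Decidable (_ ∧ _))

theorem degree_sharesNeighbor_le [Fintype V] [DecidableEq V] (H : SimpleGraph V)
    [DecidableRel H.Adj] {Δ : ℕ} (hH : ∀ v, H.degree v ≤ Δ) (v : V) :
    H.sharesNeighbor.degree v ≤ Δ ^ 2 := by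
  have hsub : H.sharesNeighbor.neighborFinset v ⊆
      (H.neighborFinset v).biUnion fun w => H.neighborFinset w := by
    intro u hu
    obtain ⟨-, w, hvw, huw⟩ := (mem_neighborFinset _ _ _).mp hu
    exact mem_biUnion.mpr ⟨w, (mem_neighborFinset _ _ _).mpr hvw,
      (mem_neighborFinset _ _ _).mpr huw.symm⟩
  rw [← card_neighborFinset_eq_degree, sq]
  refine (card_le_card hsub).trans ((card_biUnion_le_card_mul _ _ Δ fun u _ => hH u).trans ?_)
  exact Nat.mul_le_mul_right _ (by simpa using hH v)

theorem IsIndepSet.eq_of_adj_of_adj {H : SimpleGraph V} {T : Set V}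
    (hT : H.sharesNeighbor.IsIndepSet T) {p p' q : V}
    (hp : p ∈ T) (hp' : p' ∈ T) (hpq : H.Adj p q) (hp'q : H.Adj p' q) : p = p' := by
  by_contra hne
  exact hT hp hp' hne ⟨hne, q, hpq, hp'q⟩

theorem exists_adj_of_degree_compl_lt [Fintype V] [DecidableEq V] (H : SimpleGraph V)
    [DecidableRel H.Adj] {w : V} {K : Finset V} (hw : w ∉ K) (hK : Hᶜ.degree w < #K) :
    ∃ x ∈ K, H.Adj w x := by
  by_contra! h
  have : K ⊆ Hᶜ.neighborFinset w := fun x hx => by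
    rw [mem_neighborFinset, compl_adj]
    exact ⟨fun e => hw (e ▸ hx), h x hx⟩
  have := card_le_card this
  rw [card_neighborFinset_eq_degree] at this
  omega

theorem Colorable.exists_bipartition [Fintype V] [DecidableEq V] {H : SimpleGraph V}
    (hH : H.Colorable 2) :
    ∃ Q : Finset V, H.IsIndepSet ↑Q ∧ H.IsIndepSet ↑Qᶜ ∧ 2 * #Q ≤ Fintype.card V := by
  obtain ⟨C⟩ := hH
  set Q₀ : Finset V := {v | C v = 0}
  have h₀ : H.IsIndepSet ↑Q₀ := fun u hu v hv _ huv => C.valid huv (by simp_all [Q₀])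
  have h₁ : H.IsIndepSet ↑Q₀ᶜ := fun u hu v hv _ huv => C.valid huv (by simp [Q₀] at hu hv; omega)
  by_cases h : 2 * #Q₀ ≤ Fintype.card V
  · exact ⟨Q₀, h₀, h₁, h⟩
  · exact ⟨Q₀ᶜ, h₁, by rwa [compl_compl], by rw [card_compl]; omega⟩

end SimpleGraph

section PartialEmbedding

variable {α W : Type*} {H : SimpleGraph α} {G : SimpleGraph W}

def IsPartialEmb (H : SimpleGraph α) (G : SimpleGraph W) (f : α → W) (A : Finset α) : Prop :=
  Set.InjOn f A ∧ ∀ u ∈ A, ∀ v ∈ A, H.Adj u v → G.Adj (f u) (f v)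

theorem isPartialEmb_empty (f : α → W) : IsPartialEmb H G f ∅ := by
  simp [IsPartialEmb]

theorem IsPartialEmb.isSubgraphEmb [Fintype α] {f : α → W} (h : IsPartialEmb H G f univ) :
    IsSubgraphEmb H G :=
  ⟨⟨f, Set.injOn_univ.mp (by simpa using h.1)⟩,
    fun u v huv => h.2 u (mem_univ u) v (mem_univ v) huv⟩

variable [DecidableRel H.Adj] [DecidableRel G.Adj]

def extensionCandidates (H : SimpleGraph α) (G : SimpleGraph W) [DecidableRel H.Adj]
    [DecidableRel G.Adj] (f : α → W) (A : Finset α) (Y : Finset W) (v : α) : Finset W :=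
  {w ∈ Y | ∀ u ∈ A, H.Adj v u → G.Adj (f u) w}

theorem mem_extensionCandidates {f : α → W} {A : Finset α} {Y : Finset W} {v : α} {w : W} :
    w ∈ extensionCandidates H G f A Y v ↔ w ∈ Y ∧ ∀ u ∈ A, H.Adj v u → G.Adj (f u) w :=
  mem_filter

def blocked (H : SimpleGraph α) (G : SimpleGraph W) [DecidableRel H.Adj] [DecidableRel G.Adj]
    (f : α → W) (A : Finset α) (Y : Finset W) (v : α) : Finset W :=
  {w ∈ Y | ∃ u ∈ A, H.Adj v u ∧ ¬ G.Adj (f u) w}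

theorem mem_blocked {f : α → W} {A : Finset α} {Y : Finset W} {v : α} {w : W} :
    w ∈ blocked H G f A Y v ↔ w ∈ Y ∧ ∃ u ∈ A, H.Adj v u ∧ ¬ G.Adj (f u) w :=
  mem_filter

theorem extensionCandidates_eq_sdiff_blocked [DecidableEq W] (f : α → W) (A : Finset α)
    (Y : Finset W) : extensionCandidates H G f A Y = fun v => Y \ blocked H G f A Y v := by
  ext v w
  simp only [mem_extensionCandidates, mem_sdiff, mem_blocked]
  grind

variable [DecidableEq α] [DecidableEq W]

theorem IsPartialEmb.exists_extend {f₀ : α → W} {A B : Finset α}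
    (h : IsPartialEmb H G f₀ A) (hind : H.IsIndepSet ↑(B \ A)) {Y : Finset W}
    (hY : ∀ u ∈ A, f₀ u ∉ Y)
    (hall : ∀ S ⊆ B \ A, #S ≤ #(S.biUnion (extensionCandidates H G f₀ A Y))) :
    ∃ f, IsPartialEmb H G f B ∧ Set.EqOn f f₀ A ∧ ∀ v ∈ B \ A, f v ∈ Y := by
  obtain ⟨f, hf, hff₀, hfY⟩ := exists_injOn_extend_of_hall f₀ h.1 _
    (fun _ _ u hu hmem => hY u hu (mem_extensionCandidates.mp hmem).1) hall
  refine ⟨f, ⟨hf, fun u hu v hv huv => ?_⟩, hff₀,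
    fun v hv => (mem_extensionCandidates.mp (hfY v hv)).1⟩
  have hold : ∀ u ∈ B, ∀ v ∈ A, H.Adj u v → G.Adj (f v) (f u) := fun u hu v hv huv => by
    by_cases hu' : u ∈ A
    · rw [hff₀ hu', hff₀ hv]; exact (h.2 u hu' v hv huv).symm
    · rw [hff₀ hv]; exact (mem_extensionCandidates.mp (hfY u (mem_sdiff.mpr ⟨hu, hu'⟩))).2 v hv huv
  by_cases hu' : u ∈ A
  · exact hold v hv u hu' huv.symm
  by_cases hv' : v ∈ A
  · exact (hold u hu v hv' huv).symm
  exact absurd huv (hind (by simp [hu, hu']) (by simp [hv, hv']) huv.ne)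

theorem IsPartialEmb.exists_extend_of_card_le {f₀ : α → W} {A B : Finset α}
    (h : IsPartialEmb H G f₀ A) (hind : H.IsIndepSet ↑(B \ A))
    (hnadj : ∀ u ∈ B \ A, ∀ v ∈ A, ¬ H.Adj u v) {Y : Finset W} (hY : ∀ u ∈ A, f₀ u ∉ Y)
    (hcard : #(B \ A) ≤ #Y) :
    ∃ f, IsPartialEmb H G f B ∧ Set.EqOn f f₀ A ∧ ∀ v ∈ B \ A, f v ∈ Y := by
  refine h.exists_extend hind hY fun S hS => ?_
  obtain rfl | ⟨v, hv⟩ := S.eq_empty_or_nonempty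
  · simp
  calc #S ≤ #Y := (card_le_card hS).trans hcard
    _ ≤ #(S.biUnion (extensionCandidates H G f₀ A Y)) := card_le_card fun w hw =>
      mem_biUnion.mpr ⟨v, hv, mem_extensionCandidates.mpr
        ⟨hw, fun u hu hvu => absurd hvu (hnadj v (hS hv) u hu)⟩⟩

end PartialEmbedding

section FewNonNeighbours

variable {α W : Type*} [Fintype α] [Fintype W] [DecidableEq W]
  {H : SimpleGraph α} {G : SimpleGraph W} [DecidableRel H.Adj] [DecidableRel G.Adj]
  {X : Finset W} {s : ℕ}

theorem sum_card_sdiff_neighborFinset_le (hG : ∀ w ∉ X, Gᶜ.degree w ≤ s) :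
    ∑ x ∈ X, #(Xᶜ \ G.neighborFinset x) ≤ s * #Xᶜ := by
  have hbip : ∀ x ∈ X, Xᶜ \ G.neighborFinset x = Xᶜ.bipartiteAbove (fun x w => ¬ G.Adj x w) x :=
    fun x _ => by ext; simp [bipartiteAbove]
  rw [sum_congr rfl fun x hx => congrArg card (hbip x hx),
    sum_card_bipartiteAbove_eq_sum_card_bipartiteBelow]
  calc ∑ w ∈ Xᶜ, #(X.bipartiteBelow (fun x w => ¬ G.Adj x w) w)
      ≤ ∑ _w ∈ Xᶜ, s := sum_le_sum fun w hw => by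
        refine (card_le_card fun x hx => ?_).trans
          ((card_neighborFinset_eq_degree Gᶜ w).le.trans (hG w (mem_compl.mp hw)))
        obtain ⟨hxX, hxw⟩ := (mem_bipartiteBelow _).mp hx
        rw [mem_neighborFinset, compl_adj]
        exact ⟨fun h => mem_compl.mp hw (h ▸ hxX), fun h => hxw h.symm⟩
    _ = s * #Xᶜ := by rw [sum_const, smul_eq_mul, mul_comm]

theorem exists_mem_mul_card_le_card_inter_neighborFinset {d : ℕ} {kept K : Finset W}
    (hG : ∀ w ∉ X, Gᶜ.degree w ≤ s) (hkept : kept ⊆ X) (hs : s ≤ #(X \ kept))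
    (hmin : ∀ x ∈ kept, ∀ y ∈ X \ kept,
      #(Xᶜ \ G.neighborFinset x) ≤ #(Xᶜ \ G.neighborFinset y))
    (hK : K ⊆ kept) (hKne : K.Nonempty) (hd : d * (s + #K) ≤ #Xᶜ) :
    ∃ x ∈ K, d * #K ≤ #(Xᶜ ∩ G.neighborFinset x) := by
  obtain ⟨x, hx, hxmin⟩ := K.exists_min_image (fun y => #(Xᶜ \ G.neighborFinset y)) hKne
  refine ⟨x, hx, ?_⟩
  have hdisj : Disjoint (X \ kept) K := disjoint_of_subset_right hK sdiff_disjoint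
  have hsum : (s + #K) * #(Xᶜ \ G.neighborFinset x) ≤ s * #Xᶜ :=
    calc (s + #K) * #(Xᶜ \ G.neighborFinset x)
        ≤ #((X \ kept) ∪ K) • #(Xᶜ \ G.neighborFinset x) := by
          rw [card_union_of_disjoint hdisj, smul_eq_mul]; gcongr
      _ ≤ ∑ y ∈ (X \ kept) ∪ K, #(Xᶜ \ G.neighborFinset y) := by
          refine card_nsmul_le_sum _ _ _ fun y hy => ?_
          rcases mem_union.mp hy with hy | hy
          exacts [hmin x (hK hx) y hy, hxmin y hy]
      _ ≤ ∑ y ∈ X, #(Xᶜ \ G.neighborFinset y) :=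
          sum_le_sum_of_subset (union_subset sdiff_subset (hK.trans hkept))
      _ ≤ s * #Xᶜ := sum_card_sdiff_neighborFinset_le hG
  have hsplit := card_inter_add_card_sdiff Xᶜ (G.neighborFinset x)
  have hpos : 0 < s + #K := by have := hKne.card_pos; omega
  refine Nat.le_of_mul_le_mul_left ?_ hpos
  nlinarith [Nat.mul_le_mul_left #K hd]

theorem min_mul_card_le_card_biUnion_inter_neighborFinset {d : ℕ} {kept K : Finset W}
    (hG : ∀ w ∉ X, Gᶜ.degree w ≤ s) (hkept : kept ⊆ X) (hkeptcard : #kept = #X - s)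
    (hmin : ∀ x ∈ kept, ∀ y ∈ X \ kept,
      #(Xᶜ \ G.neighborFinset x) ≤ #(Xᶜ \ G.neighborFinset y))
    (hK : K ⊆ kept) (hd : 2 * d * s ≤ #Xᶜ) :
    min (d * #K) #Xᶜ ≤ #(K.biUnion fun x => Xᶜ ∩ G.neighborFinset x) := by
  obtain rfl | hKne := K.eq_empty_or_nonempty
  · simp
  by_cases hKs : #K ≤ s
  · have hs : s ≤ #(X \ kept) := by
      have := card_le_card hK
      have := hKne.card_pos
      rw [card_sdiff_of_subset hkept]
      omega
    obtain ⟨x, hx, hxbig⟩ :=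
      exists_mem_mul_card_le_card_inter_neighborFinset (d := d) hG hkept hs hmin hK hKne
        (by nlinarith)
    exact (min_le_left _ _).trans (hxbig.trans
      (card_le_card (subset_biUnion_of_mem (fun x => Xᶜ ∩ G.neighborFinset x) hx)))
  · refine (min_le_right _ _).trans (card_le_card fun w hw => ?_)
    obtain ⟨x, hx, hwx⟩ := G.exists_adj_of_degree_compl_lt (K := K)
      (fun h => mem_compl.mp hw (hkept (hK h))) (by have := hG w (mem_compl.mp hw); omega)
    exact mem_biUnion.mpr ⟨x, hx, mem_inter.mpr ⟨hw, (mem_neighborFinset _ _ _).mpr hwx.symm⟩⟩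

theorem card_blocked_le {Δ : ℕ} {A : Finset α} {Y : Finset W} {f : α → W} {p : α}
    (hH : ∀ v, H.degree v ≤ Δ) (hG : ∀ w ∉ X, Gᶜ.degree w ≤ s)
    (hA : ∀ u ∈ A, H.Adj p u → f u ∉ X ∧ f u ∉ Y) :
    #(blocked H G f A Y p) ≤ Δ * s := by
  have hsub : blocked H G f A Y p ⊆
      {u ∈ A | H.Adj p u}.biUnion fun u => Gᶜ.neighborFinset (f u) := by
    intro w hw
    obtain ⟨hwY, u, hu, hpu, hnadj⟩ := mem_blocked.mp hw
    refine mem_biUnion.mpr ⟨u, mem_filter.mpr ⟨hu, hpu⟩, ?_⟩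
    rw [mem_neighborFinset, compl_adj]
    exact ⟨fun h => (hA u hu hpu).2 (h ▸ hwY), hnadj⟩
  have hnbr : #{u ∈ A | H.Adj p u} ≤ Δ :=
    (card_le_card fun u hu => (mem_neighborFinset _ _ _).mpr (mem_filter.mp hu).2).trans
      ((card_neighborFinset_eq_degree H p).le.trans (hH p))
  calc #(blocked H G f A Y p) ≤ #{u ∈ A | H.Adj p u} * s := (card_le_card hsub).trans
        (card_biUnion_le_card_mul _ _ _ fun u hu => by
          rw [card_neighborFinset_eq_degree]
          exact hG _ (hA u (mem_filter.mp hu).1 (mem_filter.mp hu).2).1)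
    _ ≤ Δ * s := Nat.mul_le_mul_right _ hnbr

variable [DecidableEq α]

theorem card_filter_mem_blocked_le {Δ : ℕ} {A I : Finset α} {Y : Finset W} {f : α → W} {w : W}
    (hH : ∀ v, H.degree v ≤ Δ) (hG : ∀ w ∉ X, Gᶜ.degree w ≤ s) (hf : Set.InjOn f A)
    (hw : w ∈ Y) (hwX : w ∉ X) (hA : ∀ p ∈ I, ∀ u ∈ A, H.Adj p u → f u ∉ Y) :
    #{p ∈ I | w ∈ blocked H G f A Y p} ≤ Δ * s := by
  set U := {u ∈ A | (∃ p ∈ I, H.Adj p u) ∧ ¬ G.Adj (f u) w}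
  have hU : #U ≤ s := by
    rw [← card_image_of_injOn (hf.mono (coe_subset.mpr (filter_subset _ _)))]
    refine (card_le_card fun x hx => ?_).trans
      ((card_neighborFinset_eq_degree Gᶜ w).le.trans (hG w hwX))
    obtain ⟨u, hu, rfl⟩ := mem_image.mp hx
    obtain ⟨huA, ⟨p, hp, hpu⟩, hnadj⟩ := mem_filter.mp hu
    rw [mem_neighborFinset, compl_adj]
    exact ⟨fun h => hA p hp u huA hpu (h ▸ hw), fun h => hnadj h.symm⟩
  have hsub : {p ∈ I | w ∈ blocked H G f A Y p} ⊆ U.biUnion fun u => H.neighborFinset u := by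
    intro p hp
    obtain ⟨hpI, hwp⟩ := mem_filter.mp hp
    obtain ⟨-, u, hu, hpu, hnadj⟩ := mem_blocked.mp hwp
    exact mem_biUnion.mpr ⟨u, mem_filter.mpr ⟨hu, ⟨p, hpI, hpu⟩, hnadj⟩,
      (mem_neighborFinset _ _ _).mpr hpu.symm⟩
  calc #{p ∈ I | w ∈ blocked H G f A Y p} ≤ #U * Δ := (card_le_card hsub).trans
        (card_biUnion_le_card_mul _ _ _ fun u _ =>
          (card_neighborFinset_eq_degree H u).le.trans (hH u))
    _ ≤ Δ * s := by rw [mul_comm]; gcongr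

theorem card_le_card_biUnion_extensionCandidates_of_isIndepSet {Δ : ℕ} {kept : Finset W}
    {T S : Finset α} {f : α → W} (hH : ∀ v, H.degree v ≤ Δ) (hG : ∀ w ∉ X, Gᶜ.degree w ≤ s)
    (hkept : kept ⊆ X) (hkeptcard : #kept = #X - s)
    (hmin : ∀ x ∈ kept, ∀ y ∈ X \ kept,
      #(Xᶜ \ G.neighborFinset x) ≤ #(Xᶜ \ G.neighborFinset y))
    (hT : H.sharesNeighbor.IsIndepSet ↑T) (hf : Set.InjOn f T) (hfT : ∀ p ∈ T, f p ∈ kept)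
    (hS : #S + 2 * Δ * s ≤ #Xᶜ) :
    #S ≤ #(S.biUnion (extensionCandidates H G f T Xᶜ)) := by
  by_cases hfree : ∃ q ∈ S, ∀ p ∈ T, ¬ H.Adj q p
  · obtain ⟨q, hq, hq'⟩ := hfree
    calc #S ≤ #Xᶜ := by omega
      _ ≤ _ := card_le_card fun w hw => mem_biUnion.mpr
        ⟨q, hq, mem_extensionCandidates.mpr ⟨hw, fun p hp h => absurd h (hq' p hp)⟩⟩
  push Not at hfree
  set K := {p ∈ T | ∃ q ∈ S, H.Adj q p}
  have hSK : #S ≤ Δ * #(K.image f) := by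
    have : S ⊆ K.biUnion fun p => H.neighborFinset p := fun q hq => by
      obtain ⟨p, hp, hqp⟩ := hfree q hq
      exact mem_biUnion.mpr ⟨p, mem_filter.mpr ⟨hp, q, hq, hqp⟩,
        (mem_neighborFinset _ _ _).mpr hqp.symm⟩
    rw [card_image_of_injOn (hf.mono (coe_subset.mpr (filter_subset _ _))), mul_comm]
    exact (card_le_card this).trans (card_biUnion_le_card_mul _ _ Δ fun p _ => by simpa using hH p)
  have hKkept : K.image f ⊆ kept := fun x hx => by
    obtain ⟨p, hp, rfl⟩ := mem_image.mp hx
    exact hfT p (mem_filter.mp hp).1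
  have hcand : (K.image f).biUnion (fun x => Xᶜ ∩ G.neighborFinset x) ⊆
      S.biUnion (extensionCandidates H G f T Xᶜ) := by
    intro w hw
    obtain ⟨x, hx, hxw⟩ := mem_biUnion.mp hw
    obtain ⟨p, hpK, rfl⟩ := mem_image.mp hx
    obtain ⟨hpT, q, hq, hqp⟩ := mem_filter.mp hpK
    obtain ⟨hwX, hpw⟩ := mem_inter.mp hxw
    refine mem_biUnion.mpr ⟨q, hq, mem_extensionCandidates.mpr ⟨hwX, fun p' hp' hqp' => ?_⟩⟩
    rw [hT.eq_of_adj_of_adj hp' hpT hqp'.symm hqp.symm]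
    exact (mem_neighborFinset _ _ _).mp hpw
  calc #S ≤ min (Δ * #(K.image f)) #Xᶜ := le_min hSK (by omega)
    _ ≤ _ := min_mul_card_le_card_biUnion_inter_neighborFinset hG hkept hkeptcard hmin hKkept
        (by omega)
    _ ≤ _ := card_le_card hcand

theorem card_le_card_biUnion_extensionCandidates_of_compl_degree_le {Δ : ℕ} {Y : Finset W}
    {A I S : Finset α} {f : α → W} (hH : ∀ v, H.degree v ≤ Δ)
    (hG : ∀ w ∉ X, Gᶜ.degree w ≤ s) (hf : Set.InjOn f A) (hYX : Disjoint Y X)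
    (hA : ∀ p ∈ I, ∀ u ∈ A, H.Adj p u → f u ∉ X ∧ f u ∉ Y)
    (hY : 2 * Δ * s ≤ #Y) (hIY : #I ≤ #Y) (hS : S ⊆ I) :
    #S ≤ #(S.biUnion (extensionCandidates H G f A Y)) := by
  rw [extensionCandidates_eq_sdiff_blocked]
  exact card_le_card_biUnion_sdiff (fun p hp => card_blocked_le hH hG (hA p hp))
    (fun w hw => card_filter_mem_blocked_le hH hG hf hw (disjoint_left.mp hYX hw)
      fun p hp u hu hpu => (hA p hp u hu hpu).2)
    (by rwa [← mul_assoc]) hIY hS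

theorem IsPartialEmb.isSubgraphEmb_of_compl_degree_le {Δ : ℕ} {T Q : Finset α} {f : α → W}
    (hf : IsPartialEmb H G f (T ∪ Q)) (hQc : H.IsIndepSet ↑Qᶜ) (hTQ : Disjoint T Q)
    (hH : ∀ v, H.degree v ≤ Δ) (hG : ∀ w ∉ X, Gᶜ.degree w ≤ s) (hfT : ∀ p ∈ T, f p ∈ X)
    (hfQ : ∀ q ∈ Q, f q ∉ X) (hQX : #Q + 2 * Δ * s ≤ #Xᶜ)
    (hcard : Fintype.card α ≤ #T + #Xᶜ) : IsSubgraphEmb H G := by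
  have hcardY : #(Xᶜ \ Q.image f) = #Xᶜ - #Q := by
    rw [card_sdiff_of_subset fun w hw => ?_,
      card_image_of_injOn (hf.1.mono (coe_subset.mpr subset_union_right))]
    obtain ⟨q, hq, rfl⟩ := mem_image.mp hw
    exact mem_compl.mpr (hfQ q hq)
  have hcardI : #(univ \ (T ∪ Q)) = Fintype.card α - #T - #Q := by
    rw [card_sdiff_of_subset (subset_univ _), card_univ, card_union_of_disjoint hTQ]; omega
  obtain ⟨g, hg, -, -⟩ := hf.exists_extend (B := univ) (Y := Xᶜ \ Q.image f)
    (hQc.mono (coe_subset.mpr fun v hv => by simp_all))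
    (fun u hu h => by
      rcases mem_union.mp hu with hu | hu
      · exact mem_compl.mp (mem_sdiff.mp h).1 (hfT u hu)
      · exact (mem_sdiff.mp h).2 (mem_image_of_mem f hu))
    fun S hS => card_le_card_biUnion_extensionCandidates_of_compl_degree_le hH hG hf.1
      (disjoint_of_subset_left sdiff_subset disjoint_compl_left)
      (fun p hp u hu hpu => by
        have hq : u ∈ Q := by
          by_contra hu'
          exact hQc (by simp_all) (by simpa using hu') hpu.ne hpu
        exact ⟨hfQ u hq, fun h => (mem_sdiff.mp h).2 (mem_image_of_mem f hq)⟩)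
      (by omega) (by omega) hS
  exact hg.isSubgraphEmb

end FewNonNeighbours

theorem isSubgraphEmb_of_compl_degree_le {α W : Type*} [Fintype α] [Fintype W] [DecidableEq α]
    [DecidableEq W] {H : SimpleGraph α} {G : SimpleGraph W} [DecidableRel H.Adj]
    [DecidableRel G.Adj] {Δ s : ℕ} {Q : Finset α} {X : Finset W}
    (hQ : H.IsIndepSet ↑Q) (hQc : H.IsIndepSet ↑Qᶜ) (hH : ∀ v, H.degree v ≤ Δ)
    (hG : ∀ w ∉ X, Gᶜ.degree w ≤ s) (hm : Fintype.card α + s ≤ Fintype.card W)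
    (hQX : #Q + 2 * Δ * s ≤ #Xᶜ) (hXQ : (Δ ^ 2 + 1) * #X ≤ #Qᶜ) : IsSubgraphEmb H G := by
  obtain ⟨kept, hkeptX, hkept, hmin⟩ :=
    X.exists_subset_card_eq_forall_le (fun x => #(Xᶜ \ G.neighborFinset x)) (Nat.sub_le #X s)
  obtain ⟨T, hTQ, hT, hTind⟩ := H.sharesNeighbor.exists_isIndepSet_subset_card_eq
    (degree_sharesNeighbor_le H hH) (t := #X - s) (A := Qᶜ)
    (by rw [mul_comm]; exact (Nat.mul_le_mul_left _ (Nat.sub_le _ _)).trans hXQ)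
  have hTQdisj : Disjoint T Q := disjoint_of_subset_left hTQ disjoint_compl_left
  obtain ⟨f₀⟩ := Function.Embedding.nonempty_of_card_le (α := α) (β := W) (by omega)
  obtain ⟨f₁, hf₁, -, hf₁T⟩ := (isPartialEmb_empty (H := H) (G := G) f₀).exists_extend_of_card_le
    (B := T) (Y := kept) (by simpa using hQc.mono (coe_subset.mpr hTQ)) (by simp) (by simp)
    (by simp [hT, hkept])
  have hQnew : (T ∪ Q) \ T = Q := by rw [union_sdiff_left, hTQdisj.symm.sdiff_eq_left]
  obtain ⟨f₂, hf₂, hf₂f₁, hf₂Q⟩ := hf₁.exists_extend (B := T ∪ Q) (Y := Xᶜ) (by rwa [hQnew])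
    (fun p hp => by simpa using hkeptX (hf₁T p (by simpa using hp)))
    fun S hS => card_le_card_biUnion_extensionCandidates_of_isIndepSet hH hG hkeptX hkept hmin
      hTind hf₁.1 (fun p hp => hf₁T p (by simpa using hp))
      ((Nat.add_le_add_right (card_le_card (hS.trans hQnew.subset)) _).trans hQX)
  refine hf₂.isSubgraphEmb_of_compl_degree_le hQc hTQdisj hH hG
    (fun p hp => hf₂f₁ (mem_coe.mpr hp) ▸ hkeptX (hf₁T p (by simpa using hp)))
    (fun q hq => mem_compl.mp (hf₂Q q (hQnew.symm ▸ hq))) hQX ?_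
  rw [hT, card_compl]
  omega

theorem mul_sub_add_one_le_of_le_one_add_div {Δ n m : ℕ} (hΔ : 0 < Δ) (hnm : n ≤ m)
    (h : (m : ℝ) ≤ (1 + 1 / (4 * (Δ : ℝ) * ((Δ : ℝ) + 1))) * n - 1) :
    4 * Δ * (Δ + 1) * (m - n + 1) ≤ n := by
  have hc : (0 : ℝ) < 4 * Δ * (Δ + 1) := by positivity
  rw [← Nat.cast_le (α := ℝ)]
  push_cast [Nat.cast_sub hnm]
  have : (m : ℝ) - n + 1 ≤ n / (4 * Δ * (Δ + 1)) := by rw [div_eq_mul_one_div]; linarith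
  calc 4 * (Δ : ℝ) * (Δ + 1) * (m - n + 1) ≤ 4 * Δ * (Δ + 1) * (n / (4 * Δ * (Δ + 1))) := by gcongr
    _ = n := mul_div_cancel₀ _ hc.ne'

theorem small_case (Δ : ℕ) (hΔ : 0 < Δ) (α W : Type) [Fintype α] [Fintype W]
    (H : SimpleGraph α) (G : SimpleGraph W) (X : Set W) (hXproper : X ≠ Set.univ)
    (hbip : H.Colorable 2) (hmaxdeg : ∀ v, deg H v ≤ Δ)
    (hdeg : ∀ w : W, w ∉ X → Fintype.card α - 1 ≤ deg G w)
    (hsize : (Fintype.card W : ℝ) ≤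
      (1 + 1 / (4 * (Δ : ℝ) * ((Δ : ℝ) + 1))) * (Fintype.card α : ℝ) - 1)
    (hX : (X.ncard : ℝ) ≤ (Fintype.card α : ℝ) / (((Δ : ℝ) + 1) * ((Δ : ℝ) ^ 2 + 1))) :
    IsSubgraphEmb H G := by
  classical
  obtain ⟨w₀, hw₀⟩ := Set.ne_univ_iff_exists_notMem X |>.mp hXproper
  have hnm : Fintype.card α ≤ Fintype.card W := by
    have := deg_eq_degree G w₀ ▸ hdeg w₀ hw₀
    have := G.degree_lt_card_verts w₀
    omega
  have hs := mul_sub_add_one_le_of_le_one_add_div hΔ hnm hsize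
  have hXn : (Δ + 1) * (Δ ^ 2 + 1) * #X.toFinset ≤ Fintype.card α := by
    rw [Set.ncard_eq_toFinset_card', le_div_iff₀ (by positivity)] at hX
    exact_mod_cast (mul_comm _ _).trans_le hX
  have h8 : 8 * (Δ * (Fintype.card W - Fintype.card α)) ≤ Fintype.card α := by nlinarith
  have h2 : 2 * ((Δ ^ 2 + 1) * #X.toFinset) ≤ Fintype.card α := by nlinarith
  have h4 : 4 * #X.toFinset ≤ Fintype.card α := by nlinarith [Nat.one_le_pow 2 Δ hΔ]
  obtain ⟨Q, hQ, hQc, hQn⟩ := hbip.exists_bipartition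
  refine isSubgraphEmb_of_compl_degree_le (s := Fintype.card W - Fintype.card α)
    (X := X.toFinset) hQ hQc (fun v => deg_eq_degree H v ▸ hmaxdeg v) (fun w hw => ?_)
    (by omega) ?_ (by rw [card_compl]; omega)
  · have := deg_eq_degree G w ▸ hdeg w (by simpa using hw)
    rw [degree_compl]
    omega
  · have := card_le_univ X.toFinset
    rw [card_compl, mul_assoc]
    omega
end

section
/- If k > 0 and G is a non-null graph, then there exist a subgraph G′ of G and a set X ⊊ V(G′) such that |X| ≤ 2k and the pair (G′, X) is (δ(G), k)-dense, where δ(G) is the minimum degree of G. -/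
open SimpleGraph

/-! Keep a pair `(S, X)` with `X ⊊ S`, `|X| ≤ 2k` and every vertex of `S \ X` having at least
`δ(G)` neighbours in `S`; initially `(V, ∅)`. If `(G[S], X)` is not `k`-dense, a separation
`(A, B)` of `G[S]` of order at most `k` has neither `A \ B` nor `B \ A` inside `X`. These two sets
are disjoint, so `X` meets one of them, say `A \ B`, in at most `k` vertices, and
`(A, (X ∩ (A \ B)) ∪ (A ∩ B))` is again such a pair: a vertex of `A \ B` keeps all its
neighbours. Since `S` strictly shrinks, the process stops at a dense pair. -/

variable {V : Type*} {G : SimpleGraph V}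

theorem IsSeparation.symm {H : SimpleGraph V} {A B : Set V} (h : IsSeparation H A B) :
    IsSeparation H B A :=
  ⟨Set.union_comm A B ▸ h.1, h.2.2.1, h.2.1, fun u hu v hv huv => h.2.2.2 v hv u hu huv.symm⟩

theorem IsSeparation.neighborSet_subset {H : SimpleGraph V} {A B : Set V}
    (h : IsSeparation H A B) {v : V} (hv : v ∈ A \ B) : H.neighborSet v ⊆ A := by
  intro u hu
  by_contra huA
  have huB : u ∈ B := (h.1 ▸ Set.mem_univ u : u ∈ A ∪ B).resolve_left huA
  exact h.2.2.2 v hv u ⟨huB, huA⟩ hu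

theorem IsSeparation.image_val_ssubset {S : Set V} {H : SimpleGraph S} {A B : Set S}
    (h : IsSeparation H A B) : Subtype.val '' A ⊂ S := by
  have hA : A ⊂ Set.univ := Set.ssubset_univ_iff.2 fun hA => h.2.2.1 (hA ▸ Set.subset_univ B)
  have := Subtype.val_injective.image_strictMono hA
  rwa [Set.image_univ, Subtype.range_coe] at this

theorem image_val_neighborSet_induce_top (S : Set V) (v : ((⊤ : G.Subgraph).induce S).verts) :
    Subtype.val '' ((⊤ : G.Subgraph).induce S).coe.neighborSet v = S ∩ G.neighborSet v := by
  ext u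
  constructor
  · rintro ⟨w, hw, rfl⟩
    exact ⟨w.2, hw.2.2⟩
  · rintro ⟨huS, hu⟩
    exact ⟨⟨u, huS⟩, ⟨v.2, huS, hu⟩, rfl⟩

theorem deg_induce_top_coe (S : Set V) (v : ((⊤ : G.Subgraph).induce S).verts) :
    deg ((⊤ : G.Subgraph).induce S).coe v = (S ∩ G.neighborSet v).ncard := by
  rw [deg, ← image_val_neighborSet_induce_top, Set.ncard_image_of_injective _ Subtype.val_injective]

theorem ncard_inter_le_or_ncard_inter_le {α : Type*} [Finite α] {X P Q : Set α} {k : ℝ}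
    (hX : (X.ncard : ℝ) ≤ 2 * k) (hPQ : Disjoint P Q) :
    ((X ∩ P).ncard : ℝ) ≤ k ∨ ((X ∩ Q).ncard : ℝ) ≤ k := by
  have hsum : (X ∩ P).ncard + (X ∩ Q).ncard ≤ X.ncard := by
    rw [← Set.ncard_union_eq (hPQ.mono Set.inter_subset_right Set.inter_subset_right)]
    exact Set.ncard_le_ncard (Set.union_subset Set.inter_subset_left Set.inter_subset_left)
  by_contra! h
  have : ((X ∩ P).ncard : ℝ) + (X ∩ Q).ncard ≤ X.ncard := by exact_mod_cast hsum
  linarith [h.1, h.2]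

structure IsDenseCandidate (G : SimpleGraph V) (d : ℕ) (k : ℝ) (S X : Set V) : Prop where
  subset : X ⊆ S
  ne : X ≠ S
  ncard_le : (X.ncard : ℝ) ≤ 2 * k
  le_ncard_inter_neighborSet : ∀ v ∈ S \ X, d ≤ (S ∩ G.neighborSet v).ncard

namespace IsDenseCandidate

variable {d : ℕ} {k : ℝ} {S X : Set V}

theorem ncard_preimage_val (h : IsDenseCandidate G d k S X) :
    (Subtype.val ⁻¹' X : Set ((⊤ : G.Subgraph).induce S).verts).ncard = X.ncard :=
  Set.ncard_preimage_of_injective_subset_range Subtype.val_injective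
    (by rw [Subtype.range_coe]; exact h.subset)

theorem densePair (h : IsDenseCandidate G d k S X)
    (hsep : ∀ A B : Set ((⊤ : G.Subgraph).induce S).verts,
      IsSeparation ((⊤ : G.Subgraph).induce S).coe A B → ((A ∩ B).ncard : ℝ) ≤ k →
        A \ B ⊆ Subtype.val ⁻¹' X ∨ B \ A ⊆ Subtype.val ⁻¹' X) :
    DensePair ((⊤ : G.Subgraph).induce S).coe (Subtype.val ⁻¹' X) d k := by
  refine ⟨fun hX => h.ne ?_, fun v hv => ?_, hsep⟩
  · exact h.subset.antisymm fun v hv => Set.eq_univ_iff_forall.1 hX ⟨v, hv⟩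
  · rw [deg_induce_top_coe]
    exact_mod_cast h.le_ncard_inter_neighborSet v ⟨v.2, hv⟩

theorem restrict [Finite V] (h : IsDenseCandidate G d k S X)
    {A B : Set ((⊤ : G.Subgraph).induce S).verts}
    (hsep : IsSeparation ((⊤ : G.Subgraph).induce S).coe A B) (hord : ((A ∩ B).ncard : ℝ) ≤ k)
    (hA : ¬ A \ B ⊆ Subtype.val ⁻¹' X) (hXA : ((Subtype.val ⁻¹' X ∩ (A \ B)).ncard : ℝ) ≤ k) :
    IsDenseCandidate G d k (Subtype.val '' A)
      (Subtype.val '' (Subtype.val ⁻¹' X ∩ (A \ B) ∪ A ∩ B)) where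
  subset := Set.image_mono <|
    Set.union_subset (Set.inter_subset_right.trans Set.sdiff_subset) Set.inter_subset_left
  ne := by
    obtain ⟨a, ha, haX⟩ := Set.not_subset.1 hA
    intro hAX
    have := (Subtype.val_injective.mem_set_image (s := A)).2 ha.1
    rw [← hAX, Subtype.val_injective.mem_set_image] at this
    exact this.elim (fun hY => haX hY.1) fun hAB => ha.2 hAB.2
  ncard_le := by
    rw [Set.ncard_image_of_injective _ Subtype.val_injective]
    calc ((Subtype.val ⁻¹' X ∩ (A \ B) ∪ A ∩ B).ncard : ℝ)
        ≤ (Subtype.val ⁻¹' X ∩ (A \ B)).ncard + (A ∩ B).ncard := by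
          exact_mod_cast Set.ncard_union_le _ _
      _ ≤ 2 * k := by linarith
  le_ncard_inter_neighborSet := by
    rintro _ ⟨⟨v, hvA, rfl⟩, hv⟩
    have hvB : v ∉ B := fun hvB => hv ⟨v, Or.inr ⟨hvA, hvB⟩, rfl⟩
    have hvX : (v : V) ∉ X := fun hvX => hv ⟨v, Or.inl ⟨hvX, hvA, hvB⟩, rfl⟩
    refine (h.le_ncard_inter_neighborSet v ⟨v.2, hvX⟩).trans (Set.ncard_le_ncard ?_)
    rw [← image_val_neighborSet_induce_top]
    exact Set.subset_inter (Set.image_mono (hsep.neighborSet_subset ⟨hvA, hvB⟩))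
      (Set.image_subset_iff.2 fun _ hu => hu.2.2)

theorem exists_ssubset [Finite V] (h : IsDenseCandidate G d k S X)
    {A B : Set ((⊤ : G.Subgraph).induce S).verts}
    (hsep : IsSeparation ((⊤ : G.Subgraph).induce S).coe A B) (hord : ((A ∩ B).ncard : ℝ) ≤ k)
    (hA : ¬ A \ B ⊆ Subtype.val ⁻¹' X) (hB : ¬ B \ A ⊆ Subtype.val ⁻¹' X) :
    ∃ S₁ ⊂ S, ∃ X₁, IsDenseCandidate G d k S₁ X₁ := by
  have hsmall := ncard_inter_le_or_ncard_inter_le (h.ncard_preimage_val ▸ h.ncard_le)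
    (disjoint_sdiff_sdiff (x := A) (y := B))
  rcases hsmall with hXA | hXB
  · exact ⟨_, hsep.image_val_ssubset, _, h.restrict hsep hord hA hXA⟩
  · exact ⟨_, hsep.symm.image_val_ssubset, _,
      h.restrict hsep.symm (Set.inter_comm A B ▸ hord) hB hXB⟩

theorem exists_densePair [Finite V] {S X : Set V} (h : IsDenseCandidate G d k S X) :
    ∃ (S' : Set V) (Y : Set ((⊤ : G.Subgraph).induce S').verts),
      (Y.ncard : ℝ) ≤ 2 * k ∧ DensePair ((⊤ : G.Subgraph).induce S').coe Y d k := by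
  by_cases hdense : ∀ A B : Set ((⊤ : G.Subgraph).induce S).verts,
      IsSeparation ((⊤ : G.Subgraph).induce S).coe A B → ((A ∩ B).ncard : ℝ) ≤ k →
        A \ B ⊆ Subtype.val ⁻¹' X ∨ B \ A ⊆ Subtype.val ⁻¹' X
  · exact ⟨S, _, h.ncard_preimage_val ▸ h.ncard_le, h.densePair hdense⟩
  · push Not at hdense
    obtain ⟨A, B, hsep, hord, hA, hB⟩ := hdense
    obtain ⟨S₁, hS₁, X₁, h₁⟩ := h.exists_ssubset hsep hord hA hB
    exact h₁.exists_densePair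
termination_by S.ncard
decreasing_by exact Set.ncard_lt_ncard hS₁

end IsDenseCandidate

theorem dense_sub (k : ℝ) (hk : 0 < k) (V : Type) [Fintype V] [Nonempty V]
    (G : SimpleGraph V) :
    ∃ (G' : G.Subgraph) (X : Set G'.verts),
      (X.ncard : ℝ) ≤ 2 * k ∧ DensePair G'.coe X (minDeg G : ℝ) k := by
  have hstart : IsDenseCandidate G (minDeg G) k Set.univ ∅ :=
    { subset := Set.empty_subset _
      ne := Set.empty_ne_univ
      ncard_le := by simp only [Set.ncard_empty, Nat.cast_zero]; positivity
      le_ncard_inter_neighborSet := fun v _ => by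
        rw [Set.univ_inter]
        exact Nat.sInf_le ⟨v, rfl⟩ }
  obtain ⟨S, Y, hY, hdense⟩ := hstart.exists_densePair
  exact ⟨(⊤ : G.Subgraph).induce S, Y, hY, hdense⟩
end

section
/- For every ε > 0 there exists δ > 0 (depending only on ε) satisfying the following. If (G,X) is an ε·|V(G)|-dense pair, then there exists a set Z ⊆ V(G) with |Z| ≤ ε·|V(G)| such that for all distinct vertices p₁, q₁, …, p_t, q_t ∈ V(G) ∖ (X ∪ Z) with t ≤ δ·|V(G)|, there exists a collection of pairwise internally vertex-disjoint paths P₁, …, P_t in G such that, for every 1 ≤ i ≤ t, the path P_i has ends p_i and q_i and all its internal vertices lie in Z. -/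
open SimpleGraph

/-!
In an `εn`-dense pair, a ball around a vertex `u ∉ X` avoiding a set `W` of at most `εn/2`
vertices grows by more than `εn/2` in each step until it reaches a given vertex `h ∉ X`: otherwise
its boundary together with `W` would be a separation of order at most `εn` with `u` and `h` on
different sides. Hence any two vertices outside `X` are joined by a path of length at most
`L ≈ 2/ε` avoiding `W`, and, greedily, by a fan of linearly many such paths with disjoint interiors.

Let `Z` contain each vertex independently with probability `ε/2`. By Markov's inequality
`|Z| ≤ εn` with probability more than `1/2`, and since the paths of a fan are disjoint, `Z`
contains fewer than `s` of them (for a suitable `s` linear in `n`) only with exponentially small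
probability. A union bound over the `n²` fans yields a good `Z`. Finally, `t ≤ δn` pairs are
linked one after another: the paths chosen so far have fewer than `s` inner vertices, so every fan
still has a path inside `Z` that avoids them.
-/

open Finset

namespace SimpleGraph.Walk

variable {V : Type*} [DecidableEq V] {G : SimpleGraph V} {u v x : V}

def innerSupport (w : G.Walk u v) : Finset V := w.support.toFinset \ {u, v}

lemma mem_innerSupport {w : G.Walk u v} :
    x ∈ w.innerSupport ↔ x ∈ w.support ∧ x ≠ u ∧ x ≠ v := by
  simp [innerSupport]

lemma card_innerSupport_le_length (w : G.Walk u v) : #w.innerSupport ≤ w.length := by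
  have hsub : w.innerSupport ⊆ w.support.toFinset.erase u := fun x hx => by
    rw [mem_innerSupport] at hx
    simp [hx.1, hx.2.1]
  calc #w.innerSupport ≤ #(w.support.toFinset.erase u) := card_le_card hsub
    _ = #w.support.toFinset - 1 := card_erase_of_mem (by simp)
    _ ≤ w.support.length - 1 := Nat.sub_le_sub_right (List.toFinset_card_le _) 1
    _ = w.length := by simp [length_support]

end SimpleGraph.Walk

lemma KDense.mono {V : Type*} {G : SimpleGraph V} {X : Set V} {k k' : ℝ} (hX : KDense G X k)
    (hk : k' ≤ k) : KDense G X k' :=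
  ⟨hX.1, fun A B hAB hord => hX.2 A B hAB (hord.trans hk)⟩

section Balls

variable {V : Type*} {G : SimpleGraph V} {X : Set V} {k : ℝ}
  {W : Finset V} {u h : V} {r : ℕ}

def avoidingBall (G : SimpleGraph V) (W : Finset V) (u : V) (r : ℕ) : Set V :=
  {v | ∃ w : G.Walk u v, w.length ≤ r ∧ ∀ x ∈ w.support, x ∉ W}

lemma avoidingBall_mono {r r' : ℕ} (hr : r ≤ r') : avoidingBall G W u r ⊆ avoidingBall G W u r' :=
  fun _ ⟨w, hl, hW⟩ => ⟨w, hl.trans hr, hW⟩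

lemma mem_avoidingBall_self (hu : u ∉ W) (r : ℕ) : u ∈ avoidingBall G W u r :=
  ⟨.nil, by simp, by simpa using hu⟩

lemma isSeparation_avoidingBall (hu : u ∉ W) (hh : h ∉ W) (hout : h ∉ avoidingBall G W u (r + 1)) :
    IsSeparation G (avoidingBall G W u (r + 1) ∪ W) (avoidingBall G W u r)ᶜ := by
  have hmono := avoidingBall_mono (G := G) (W := W) (u := u) r.le_succ
  refine ⟨?_, fun hsub => ?_, fun hsub => ?_, ?_⟩
  · refine Set.eq_univ_of_forall fun v => ?_
    by_cases hv : v ∈ avoidingBall G W u r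
    exacts [.inl (.inl (hmono hv)), .inr hv]
  · exact hsub (.inl (hmono (mem_avoidingBall_self hu r))) (mem_avoidingBall_self hu r)
  · rcases hsub (fun hr => hout (hmono hr)) with h' | h'
    exacts [hout h', hh h']
  · rintro x ⟨-, hx⟩ y ⟨-, hy⟩ hxy
    obtain ⟨w, hl, hW⟩ := not_not.1 hx
    refine hy (.inl ⟨w.concat hxy, by simpa using hl, fun z hz => ?_⟩)
    rw [Walk.support_concat, List.mem_append, List.mem_singleton] at hz
    rcases hz with hz | rfl
    exacts [hW z hz, fun hzW => hy (.inr hzW)]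

/-- If the ball grew by at most `k - #W`, its boundary together with `W` would be a separation of
order at most `k` with `u` and `h` on different sides. -/
lemma KDense.ncard_avoidingBall_succ [Finite V] (hX : KDense G X k) (hu : u ∉ X) (hh : h ∉ X)
    (huW : u ∉ W) (hhW : h ∉ W) (hout : h ∉ avoidingBall G W u (r + 1)) :
    k - #W + (avoidingBall G W u r).ncard < (avoidingBall G W u (r + 1)).ncard := by
  set S := avoidingBall G W u r
  set S' := avoidingBall G W u (r + 1)
  have hmono : S ⊆ S' := avoidingBall_mono r.le_succ
  have horder : ((S' ∪ W) ∩ Sᶜ).ncard ≤ (S' \ S).ncard + #W := by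
    calc ((S' ∪ W) ∩ Sᶜ).ncard ≤ (S' \ S ∪ W).ncard :=
          Set.ncard_le_ncard (by rintro x ⟨hx | hx, hxS⟩ <;> simp_all) (Set.toFinite _)
      _ ≤ (S' \ S).ncard + #W := by
          simpa only [Set.ncard_coe_finset] using Set.ncard_union_le (S' \ S) (W : Set V)
  have hbig : k < ((S' ∪ W) ∩ Sᶜ).ncard := by
    by_contra! hle
    rcases hX.2 _ _ (isSeparation_avoidingBall huW hhW hout) hle with hc | hc
    · exact hu (hc ⟨.inl (hmono (mem_avoidingBall_self huW r)),
        not_not.2 (mem_avoidingBall_self huW r)⟩)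
    · exact hh (hc ⟨fun hr => hout (hmono hr), by rintro (h' | h'); exacts [hout h', hhW h']⟩)
  have hdiff : ((S' \ S).ncard : ℝ) + S.ncard = S'.ncard := by
    exact_mod_cast Set.ncard_sdiff_add_ncard_of_subset hmono (Set.toFinite _)
  have : (((S' ∪ W) ∩ Sᶜ).ncard : ℝ) ≤ (S' \ S).ncard + #W := by exact_mod_cast horder
  linarith

lemma KDense.ncard_avoidingBall_ge [Finite V] (hX : KDense G X k) (hu : u ∉ X) (hh : h ∉ X)
    (huW : u ∉ W) (hhW : h ∉ W) (hW : #W ≤ k / 2) (hout : h ∉ avoidingBall G W u r) :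
    1 + r * (k / 2) ≤ (avoidingBall G W u r).ncard := by
  induction r with
  | zero =>
    have hpos : 0 < (avoidingBall G W u 0).ncard :=
      (Set.ncard_pos).2 ⟨u, mem_avoidingBall_self huW 0⟩
    simp only [CharP.cast_eq_zero, zero_mul, add_zero, Nat.one_le_cast]
    exact hpos
  | succ r ih =>
    have h1 := ih fun hr => hout (avoidingBall_mono r.le_succ hr)
    have h2 := hX.ncard_avoidingBall_succ hu hh huW hhW hout
    push_cast
    linarith

lemma KDense.exists_isPath_avoiding [Fintype V] [DecidableEq V] (hX : KDense G X k) (hk : 0 < k)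
    (hu : u ∉ X) (hh : h ∉ X) (huW : u ∉ W) (hhW : h ∉ W) (hW : #W ≤ k / 2) :
    ∃ w : G.Walk u h, w.IsPath ∧ (w.length : ℝ) ≤ 2 * Fintype.card V / k + 1 ∧
      ∀ x ∈ w.support, x ∉ W := by
  set r := ⌊2 * Fintype.card V / k⌋₊ + 1
  have hmem : h ∈ avoidingBall G W u r := by
    by_contra hout
    have hball := hX.ncard_avoidingBall_ge hu hh huW hhW hW hout
    have hcard : ((avoidingBall G W u r).ncard : ℝ) ≤ Fintype.card V := by
      exact_mod_cast (Set.ncard_le_ncard (Set.subset_univ _)).trans_eq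
        (by rw [Set.ncard_univ, Nat.card_eq_fintype_card])
    have hr : 2 * Fintype.card V / k < r := by
      simpa [r] using Nat.lt_floor_add_one (2 * Fintype.card V / k)
    have : (Fintype.card V : ℝ) < r * (k / 2) := by
      calc (Fintype.card V : ℝ) = 2 * Fintype.card V / k * (k / 2) := by field_simp
        _ < r * (k / 2) := by gcongr
    linarith
  obtain ⟨w, hl, hW⟩ := hmem
  refine ⟨w.bypass, w.bypass_isPath, ?_, fun x hx => hW x (w.support_bypass_subset_support hx)⟩
  calc (w.bypass.length : ℝ) ≤ r := by exact_mod_cast w.length_bypass_le_length.trans hl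
    _ ≤ 2 * Fintype.card V / k + 1 := by
      simpa [r] using Nat.floor_le (by positivity : (0 : ℝ) ≤ 2 * Fintype.card V / k)

end Balls

lemma exists_pairwise_disjoint_of_avoiding {α : Type*} [DecidableEq α] {L N : ℕ} :
    ∀ {t : ℕ} {β : Fin t → Type*} (S : ∀ i, β i → Finset α) (good : ∀ i, β i → Prop),
      t * L ≤ N → (∀ i b, good i b → #(S i b) ≤ L) →
      (∀ i (W : Finset α), #W ≤ N → ∃ b, good i b ∧ Disjoint (S i b) W) →
      ∃ b : ∀ i, β i, (∀ i, good i (b i)) ∧ Pairwise fun i j => Disjoint (S i (b i)) (S j (b j))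
  | 0, _, _, _, _, _, _ => ⟨fun i => i.elim0, fun i => i.elim0, fun i => i.elim0⟩
  | t + 1, β, S, good, htN, hL, h => by
    have htN' : t * L ≤ N := le_trans (by gcongr; omega) htN
    obtain ⟨b, hgood, hdisj⟩ := exists_pairwise_disjoint_of_avoiding (fun i => S i.succ)
      (fun i => good i.succ) htN' (fun i => hL i.succ) (fun i => h i.succ)
    set W := univ.biUnion fun i => S i.succ (b i)
    have hW : #W ≤ N :=
      calc #W ≤ ∑ i, #(S i.succ (b i)) := card_biUnion_le
        _ ≤ ∑ _i : Fin t, L := sum_le_sum fun i _ => hL _ _ (hgood i)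
        _ = t * L := by simp
        _ ≤ N := htN'
    obtain ⟨b₀, hgood₀, hdisj₀⟩ := h 0 W hW
    have h0 : ∀ i : Fin t, Disjoint (S 0 b₀) (S i.succ (b i)) := fun i =>
      hdisj₀.mono_right (subset_biUnion_of_mem (fun i => S i.succ (b i)) (mem_univ i))
    refine ⟨Fin.cons (α := β) b₀ b, Fin.cases hgood₀ hgood, fun i j hij => ?_⟩
    cases i using Fin.cases <;> cases j using Fin.cases
    · exact absurd rfl hij
    · exact h0 _
    · exact (h0 _).symm
    · exact hdisj fun h' => hij (congrArg Fin.succ h')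

section Fans

variable {V : Type*} [Fintype V] [DecidableEq V] {G : SimpleGraph V} {X : Set V} {k : ℝ}

lemma KDense.exists_fan (hX : KDense G X k) (hk : 0 < k) {L m : ℕ}
    (hL : 2 * Fintype.card V / k + 1 ≤ L) (hm : m * L ≤ k / 2) {u v : V} (hu : u ∉ X)
    (hv : v ∉ X) :
    ∃ F : Fin m → G.Walk u v, (∀ j, (F j).IsPath ∧ #(F j).innerSupport ≤ L) ∧
      Pairwise fun i j => Disjoint (F i).innerSupport (F j).innerSupport := by
  refine exists_pairwise_disjoint_of_avoiding (β := fun _ => G.Walk u v)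
    (fun _ w => w.innerSupport) (fun _ w => w.IsPath ∧ #w.innerSupport ≤ L) (N := ⌊k / 2⌋₊)
    (Nat.le_floor (by exact_mod_cast hm)) (fun _ _ hw => hw.2) fun _ W hW => ?_
  have hW' : (#((W.erase u).erase v) : ℝ) ≤ k / 2 :=
    (Nat.cast_le.2 ((card_erase_le).trans card_erase_le)).trans
      ((Nat.le_floor_iff (by positivity)).1 hW)
  obtain ⟨w, hpath, hlen, hWw⟩ := hX.exists_isPath_avoiding hk hu hv
    (by simp) (by simp) hW'
  refine ⟨w, ⟨hpath, ?_⟩, Finset.disjoint_left.2 fun x hx hxW => ?_⟩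
  · exact_mod_cast (Nat.cast_le.2 w.card_innerSupport_le_length).trans (hlen.trans hL)
  · obtain ⟨hxw, hxu, hxv⟩ := Walk.mem_innerSupport.1 hx
    exact hWw x hxw (by simp [hxu, hxv, hxW])

end Fans

section BernoulliWeight

variable {V : Type*} [Fintype V] {p : ℝ}

/-- The probability that a random subset of `V`, containing each element independently with
probability `p`, equals `R`. -/
def bernoulliWeight (p : ℝ) (R : Finset V) : ℝ := p ^ #R * (1 - p) ^ (Fintype.card V - #R)

lemma bernoulliWeight_nonneg (hp0 : 0 ≤ p) (hp1 : p ≤ 1) (R : Finset V) :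
    0 ≤ bernoulliWeight p R :=
  mul_nonneg (pow_nonneg hp0 _) (pow_nonneg (sub_nonneg.2 hp1) _)

lemma sum_bernoulliWeight_superset [DecidableEq V] (p : ℝ) (A : Finset V) :
    ∑ R with A ⊆ R, bernoulliWeight p R = p ^ #A := by
  have himage : ({R | A ⊆ R} : Finset (Finset V)) = (Aᶜ).powerset.image (A ∪ ·) := by
    rw [compl_eq_univ_sdiff, ← Icc_eq_image_powerset (subset_univ A), Icc_eq_filter_powerset,
      powerset_univ]
  have hinj : Set.InjOn (A ∪ ·) ((Aᶜ).powerset : Set (Finset V)) := by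
    intro B hB C hC hBC
    simp only [coe_powerset, Set.mem_preimage, Set.mem_powerset_iff, coe_subset] at hB hC
    rw [← union_sdiff_cancel_left (disjoint_of_subset_right hB disjoint_compl_right),
      ← union_sdiff_cancel_left (disjoint_of_subset_right hC disjoint_compl_right)]
    exact congrArg (· \ A) hBC
  rw [himage, sum_image hinj]
  calc ∑ B ∈ (Aᶜ).powerset, bernoulliWeight p (A ∪ B)
      = ∑ B ∈ (Aᶜ).powerset, p ^ #A * (p ^ #B * (1 - p) ^ (#Aᶜ - #B)) := by
        refine sum_congr rfl fun B hB => ?_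
        have hAB : Disjoint A B := disjoint_of_subset_right (mem_powerset.1 hB) disjoint_compl_right
        rw [bernoulliWeight, card_union_of_disjoint hAB, card_compl, pow_add,
          Nat.sub_add_eq, mul_assoc]
    _ = p ^ #A := by rw [← mul_sum, sum_pow_mul_eq_add_pow, add_sub_cancel, one_pow, mul_one]

lemma sum_bernoulliWeight (p : ℝ) : ∑ R : Finset V, bernoulliWeight p R = 1 := by
  simp [bernoulliWeight, Fintype.sum_pow_mul_eq_add_pow]

lemma sum_bernoulliWeight_mul_card [DecidableEq V] (p : ℝ) :
    ∑ R : Finset V, bernoulliWeight p R * #R = p * Fintype.card V := by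
  have hcard : ∀ R : Finset V, (#R : ℝ) = ∑ v, if {v} ⊆ R then 1 else 0 := fun R => by
    simp
  simp_rw [hcard, mul_sum, mul_boole]
  rw [sum_comm]
  simp_rw [← sum_filter, sum_bernoulliWeight_superset, card_singleton, pow_one, sum_const,
    card_univ, nsmul_eq_mul, mul_comm]

lemma sum_bernoulliWeight_card_gt [DecidableEq V] (hp0 : 0 ≤ p) (hp1 : p ≤ 1) (K : ℕ) :
    ∑ R : Finset V with K < #R, bernoulliWeight p R ≤ p * Fintype.card V / (K + 1) := by
  rw [le_div_iff₀ (by positivity), ← sum_bernoulliWeight_mul_card, sum_mul]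
  calc ∑ R with K < #R, bernoulliWeight p R * (K + 1)
      ≤ ∑ R with K < #R, bernoulliWeight p R * #R :=
        sum_le_sum fun R hR => mul_le_mul_of_nonneg_left
          (by exact_mod_cast (mem_filter.1 hR).2) (bernoulliWeight_nonneg hp0 hp1 R)
    _ ≤ ∑ R, bernoulliWeight p R * #R :=
        sum_le_sum_of_subset_of_nonneg (filter_subset _ _) fun R _ _ =>
          mul_nonneg (bernoulliWeight_nonneg hp0 hp1 R) (Nat.cast_nonneg _)

/-- Independence of the events `I j ⊆ R` for pairwise disjoint `I j`, as a generating function.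
Both products expand (`Finset.prod_sub`) into the same sum over `J ⊆ ι`, because
`⋃ j ∈ J, I j ⊆ R` has probability `∏ j ∈ J, p ^ #(I j)`. -/
lemma sum_bernoulliWeight_mul_prod [DecidableEq V] {ι : Type*} [Fintype ι] [DecidableEq ι]
    (p c : ℝ) (I : ι → Finset V) (hI : Pairwise fun i j => Disjoint (I i) (I j)) :
    ∑ R, bernoulliWeight p R * ∏ j, (c - if I j ⊆ R then 1 else 0) = ∏ j, (c - p ^ #(I j)) := by
  have hJ : ∀ J : Finset ι,
      ∑ R, bernoulliWeight p R * ∏ j ∈ J, (if I j ⊆ R then (1 : ℝ) else 0) =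
        ∏ j ∈ J, p ^ #(I j) := fun J => by
    simp_rw [prod_boole, ← biUnion_subset, mul_boole]
    rw [← sum_filter]
    rw [sum_bernoulliWeight_superset, card_biUnion fun i _ j _ hij => hI hij,
      prod_pow_eq_pow_sum]
  simp_rw [prod_sub, mul_sum]
  rw [sum_comm]
  refine sum_congr rfl fun J _ => ?_
  rw [← hJ J, mul_sum]
  exact sum_congr rfl fun R _ => by ring

lemma sum_bernoulliWeight_mul_two_pow_card_filter_not [DecidableEq V] {ι : Type*} [Fintype ι]
    [DecidableEq ι] (hp0 : 0 ≤ p) (hp1 : p ≤ 1) {L : ℕ} (I : ι → Finset V)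
    (hI : Pairwise fun i j => Disjoint (I i) (I j)) (hIL : ∀ j, #(I j) ≤ L) :
    ∑ R, bernoulliWeight p R * 2 ^ #{j | ¬ I j ⊆ R} ≤ (2 - p ^ L) ^ Fintype.card ι := by
  have hprod (R : Finset V) :
      ∏ j, (2 - if I j ⊆ R then (1 : ℝ) else 0) = 2 ^ #{j | ¬ I j ⊆ R} := by
    have hfactor (j : ι) : (2 - if I j ⊆ R then (1 : ℝ) else 0) =
        2 ^ (if ¬ I j ⊆ R then 1 else 0) := by split_ifs <;> norm_num
    simp_rw [hfactor]
    rw [prod_pow_eq_pow_sum, card_filter]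
  simp_rw [← hprod]
  rw [sum_bernoulliWeight_mul_prod p 2 I hI, ← card_univ, ← prod_const]
  refine prod_le_prod (fun j _ => ?_) fun j _ => ?_
  · linarith [pow_le_one₀ hp0 hp1 (n := #(I j))]
  · linarith [pow_le_pow_of_le_one hp0 hp1 (hIL j)]

/-- Markov's inequality for `2 ^ #{j | ¬ I j ⊆ R}`. -/
lemma sum_bernoulliWeight_card_filter_lt [DecidableEq V] {ι : Type*} [Fintype ι] [DecidableEq ι]
    (hp0 : 0 ≤ p) (hp1 : p ≤ 1) {L : ℕ} (s : ℕ) (I : ι → Finset V)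
    (hI : Pairwise fun i j => Disjoint (I i) (I j)) (hIL : ∀ j, #(I j) ≤ L) :
    ∑ R : Finset V with #{j | I j ⊆ R} < s, bernoulliWeight p R ≤
      2 ^ s * (1 - p ^ L / 2) ^ Fintype.card ι := by
  set m := Fintype.card ι
  have hpoint (R : Finset V) (hR : #{j | I j ⊆ R} < s) :
      (2 : ℝ) ^ m ≤ 2 ^ s * 2 ^ #{j | ¬ I j ⊆ R} := by
    rw [← pow_add]
    have := card_filter_add_card_filter_not (s := univ) fun j => I j ⊆ R
    exact pow_le_pow_right₀ one_le_two (by rw [card_univ] at this; omega)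
  have hw : ∀ R : Finset V, 0 ≤ bernoulliWeight p R := bernoulliWeight_nonneg hp0 hp1
  have hkey : 2 ^ m * ∑ R : Finset V with #{j | I j ⊆ R} < s, bernoulliWeight p R ≤
      2 ^ m * (2 ^ s * (1 - p ^ L / 2) ^ m) :=
    calc 2 ^ m * ∑ R : Finset V with #{j | I j ⊆ R} < s, bernoulliWeight p R
        ≤ ∑ R : Finset V with #{j | I j ⊆ R} < s,
            2 ^ s * (bernoulliWeight p R * 2 ^ #{j | ¬ I j ⊆ R}) := by
          rw [mul_sum]
          refine sum_le_sum fun R hR => ?_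
          rw [mul_left_comm, mul_comm]
          exact mul_le_mul_of_nonneg_left (hpoint R (mem_filter.1 hR).2) (hw R)
      _ ≤ 2 ^ s * ∑ R, bernoulliWeight p R * 2 ^ #{j | ¬ I j ⊆ R} := by
          rw [mul_sum]
          exact sum_le_sum_of_subset_of_nonneg (filter_subset _ _) fun R _ _ =>
            mul_nonneg (by positivity) (mul_nonneg (hw R) (by positivity))
      _ ≤ 2 ^ s * (2 - p ^ L) ^ m := by
          gcongr; exact sum_bernoulliWeight_mul_two_pow_card_filter_not hp0 hp1 I hI hIL
      _ = 2 ^ m * (2 ^ s * (1 - p ^ L / 2) ^ m) := by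
          rw [mul_left_comm, ← mul_pow]; ring
  exact le_of_mul_le_mul_left hkey (by positivity)

end BernoulliWeight

section Hub

variable {V : Type*} [Fintype V] {p : ℝ}

lemma exists_lt_one_of_sum_bernoulliWeight_mul_lt_one (hp0 : 0 ≤ p) (hp1 : p ≤ 1)
    (f : Finset V → ℝ) (h : ∑ R, bernoulliWeight p R * f R < 1) : ∃ R, f R < 1 := by
  by_contra! hf
  refine h.not_ge ?_
  calc 1 = ∑ R, bernoulliWeight p R := (sum_bernoulliWeight p).symm
    _ ≤ ∑ R, bernoulliWeight p R * f R :=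
        sum_le_sum fun R _ => le_mul_of_one_le_right (bernoulliWeight_nonneg hp0 hp1 R) (hf R)

lemma exists_card_le_forall_le_card_filter_subset [DecidableEq V] {ι κ : Type*} [Fintype ι]
    [Fintype κ] [DecidableEq κ] (hp0 : 0 ≤ p) (hp1 : p ≤ 1) {L s K : ℕ} (I : ι → κ → Finset V)
    (hI : ∀ a, Pairwise fun i j => Disjoint (I a i) (I a j)) (hIL : ∀ a j, #(I a j) ≤ L)
    (h : p * Fintype.card V / (K + 1) +
      Fintype.card ι * (2 ^ s * (1 - p ^ L / 2) ^ Fintype.card κ) < 1) :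
    ∃ R : Finset V, #R ≤ K ∧ ∀ a, s ≤ #{j | I a j ⊆ R} := by
  have hsize := sum_bernoulliWeight_card_gt (V := V) hp0 hp1 K
  have hfan : ∑ a, ∑ R : Finset V with #{j | I a j ⊆ R} < s, bernoulliWeight p R ≤
      Fintype.card ι * (2 ^ s * (1 - p ^ L / 2) ^ Fintype.card κ) := by
    rw [← nsmul_eq_mul, ← card_univ, ← sum_const]
    exact sum_le_sum fun a _ => sum_bernoulliWeight_card_filter_lt hp0 hp1 s (I a) (hI a) (hIL a)
  rw [sum_filter] at hsize
  simp_rw [sum_filter] at hfan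
  obtain ⟨R, hR⟩ := exists_lt_one_of_sum_bernoulliWeight_mul_lt_one hp0 hp1
    (fun R => (if K < #R then 1 else 0) + ∑ a, if #{j | I a j ⊆ R} < s then 1 else 0) (by
      simp_rw [mul_add, mul_sum, mul_boole]
      rw [sum_add_distrib, sum_comm]
      exact (add_le_add hsize hfan).trans_lt h)
  have hind : ∀ (P : Prop) [Decidable P], 0 ≤ if P then (1 : ℝ) else 0 :=
    fun _ _ => ite_nonneg zero_le_one le_rfl
  refine ⟨R, not_lt.1 fun hK => ?_, fun a => not_lt.1 fun ha => ?_⟩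
  · rw [if_pos hK] at hR
    linarith [sum_nonneg fun a (_ : a ∈ univ) => hind (#{j | I a j ⊆ R} < s)]
  · have := single_le_sum (fun b _ => hind (#{j | I b j ⊆ R} < s)) (mem_univ a)
    rw [if_pos ha] at this
    linarith [hind (K < #R)]

end Hub

lemma exists_subset_disjoint_of_card_lt {α κ : Type*} [DecidableEq α] [Fintype κ]
    (I : κ → Finset α) (hI : Pairwise fun i j => Disjoint (I i) (I j)) {R W : Finset α}
    (hW : #W < #{j | I j ⊆ R}) : ∃ j, I j ⊆ R ∧ Disjoint (I j) W := by
  by_contra! h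
  refine hW.not_ge ?_
  calc #{j | I j ⊆ R} = ∑ j with I j ⊆ R, 1 := card_eq_sum_ones _
    _ ≤ ∑ j with I j ⊆ R, #(I j ∩ W) := sum_le_sum fun j hj =>
        card_pos.2 (not_disjoint_iff_nonempty_inter.1 (h j (mem_filter.1 hj).2))
    _ = #(({j | I j ⊆ R} : Finset κ).biUnion fun j => I j ∩ W) :=
        (card_biUnion fun i _ j _ hij => (hI hij).mono inter_subset_left inter_subset_left).symm
    _ ≤ #W := card_le_card (biUnion_subset.2 fun j _ => inter_subset_right)

section Routing

variable {V : Type*} [DecidableEq V] {G : SimpleGraph V} {X : Set V}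

def IsRoutingSet (G : SimpleGraph V) (X : Set V) (R : Finset V) (L s : ℕ) : Prop :=
  ∀ u v, u ∉ X → v ∉ X → ∀ W : Finset V, #W < s → ∃ w : G.Walk u v,
    w.IsPath ∧ w.innerSupport ⊆ R ∧ #w.innerSupport ≤ L ∧ Disjoint w.innerSupport W

lemma IsRoutingSet.exists_paths {R : Finset V} {L s t : ℕ} (hR : IsRoutingSet G X R L s)
    (hts : t * L < s) (p q : Fin t → V) (hp : ∀ i, p i ∉ X) (hq : ∀ i, q i ∉ X) :
    ∃ P : ∀ i, G.Walk (p i) (q i), (∀ i, (P i).IsPath ∧ (P i).innerSupport ⊆ R) ∧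
      Pairwise fun i j => Disjoint (P i).innerSupport (P j).innerSupport := by
  obtain ⟨P, hP, hdisj⟩ := exists_pairwise_disjoint_of_avoiding
    (β := fun i => G.Walk (p i) (q i)) (fun _ w => w.innerSupport)
    (fun _ w => w.IsPath ∧ w.innerSupport ⊆ R ∧ #w.innerSupport ≤ L) (N := s - 1) (by omega)
    (fun _ _ hw => hw.2.2) fun i W hW => by
      obtain ⟨w, hpath, hwR, hwL, hwW⟩ := hR (p i) (q i) (hp i) (hq i) W (by omega)
      exact ⟨w, ⟨hpath, hwR, hwL⟩, hwW⟩
  exact ⟨P, fun i => ⟨(hP i).1, (hP i).2.1⟩, hdisj⟩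

lemma KDense.exists_isRoutingSet [Fintype V] {k : ℝ} (hX : KDense G X k) (hk : 0 < k)
    {L m s K : ℕ} {p : ℝ} (hp0 : 0 ≤ p) (hp1 : p ≤ 1) (hL : 2 * Fintype.card V / k + 1 ≤ L)
    (hm : m * L ≤ k / 2)
    (h : p * Fintype.card V / (K + 1) +
      (Fintype.card V : ℝ) ^ 2 * (2 ^ s * (1 - p ^ L / 2) ^ m) < 1) :
    ∃ R : Finset V, #R ≤ K ∧ IsRoutingSet G X R L s := by
  classical
  let ι := {x : V × V // x.1 ∉ X ∧ x.2 ∉ X}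
  have hfan (x : ι) := hX.exists_fan hk hL hm x.2.1 x.2.2
  choose F hF hdisj using hfan
  have hι : (Fintype.card ι : ℝ) ≤ Fintype.card V ^ 2 := by
    exact_mod_cast (Fintype.card_subtype_le _).trans (by rw [Fintype.card_prod, sq])
  have hfactor : 0 ≤ 2 ^ s * (1 - p ^ L / 2) ^ m :=
    mul_nonneg (by positivity) (pow_nonneg (by linarith [pow_le_one₀ hp0 hp1 (n := L)]) m)
  have hsum : p * Fintype.card V / (K + 1) +
      Fintype.card ι * (2 ^ s * (1 - p ^ L / 2) ^ Fintype.card (Fin m)) < 1 := by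
    rw [Fintype.card_fin]
    linarith [mul_le_mul_of_nonneg_right hι hfactor]
  obtain ⟨R, hRK, hR⟩ := exists_card_le_forall_le_card_filter_subset hp0 hp1
    (fun x j => (F x j).innerSupport) hdisj (fun x j => (hF x j).2) hsum
  refine ⟨R, hRK, fun u v hu hv W hW => ?_⟩
  let x : ι := ⟨(u, v), hu, hv⟩
  obtain ⟨j, hjR, hjW⟩ := exists_subset_disjoint_of_card_lt (fun j => (F x j).innerSupport)
    (hdisj x) (hW.trans_le (hR x))
  exact ⟨F x j, (hF x j).1, hjR, (hF x j).2, hjW⟩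

end Routing

open Filter Topology in
/-- `B` is chosen with `r ^ B < 1 / 4`, so that for `k = n / (A * B)` the factor `r ^ (n / A)` is
at most `4⁻¹ ^ k`, which beats `2 ^ k * n ^ 2`. -/
lemma exists_sq_mul_two_pow_mul_pow_lt {r : ℝ} (hr0 : 0 ≤ r) (hr1 : r < 1) {A : ℕ} (hA : 0 < A) :
    ∃ B k₀ : ℕ, 0 < B ∧ ∀ n : ℕ, k₀ ≤ n / (A * B) →
      (n : ℝ) ^ 2 * (2 ^ (n / (A * B) + 1) * r ^ (n / A)) < 1 / 2 := by
  obtain ⟨B, hB⟩ := exists_pow_lt_of_lt_one (by norm_num : (0 : ℝ) < 1 / 4) hr1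
  have hB0 : 0 < B := Nat.pos_of_ne_zero fun h0 => by norm_num [h0] at hB
  set C : ℝ := 4 * (A * B) ^ 2
  have htend :
      Tendsto (fun k : ℕ => C * (((k + 1 : ℕ) : ℝ) ^ 2 * (1 / 2) ^ (k + 1))) atTop (𝓝 0) := by
    simpa using ((tendsto_pow_const_mul_const_pow_of_abs_lt_one 2 (r := 1 / 2)
      (by norm_num)).comp (tendsto_add_atTop_nat 1)).const_mul C
  obtain ⟨k₀, hk₀⟩ := eventually_atTop.1 (htend.eventually_lt_const (by norm_num : (0 : ℝ) < 1 / 2))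
  refine ⟨B, k₀, hB0, fun n hk => ?_⟩
  set k := n / (A * B)
  have hn : (n : ℝ) ≤ A * B * (k + 1) := by
    exact_mod_cast (Nat.lt_mul_div_succ n (by positivity : 0 < A * B)).le
  have hkB : B * k ≤ n / A := by
    rw [Nat.le_div_iff_mul_le hA]
    calc B * k * A = k * (A * B) := by ring
      _ ≤ n := Nat.div_mul_le_self n _
  have hr : r ^ (n / A) ≤ (1 / 4) ^ k :=
    calc r ^ (n / A) ≤ r ^ (B * k) := pow_le_pow_of_le_one hr0 hr1.le hkB
      _ = (r ^ B) ^ k := pow_mul r B k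
      _ ≤ (1 / 4) ^ k := pow_le_pow_left₀ (pow_nonneg hr0 B) hB.le k
  have h2 : (2 : ℝ) ^ k * (1 / 2) ^ k = 1 := by rw [← mul_pow]; norm_num
  have h4 : (1 / 4 : ℝ) ^ k = (1 / 2) ^ k * (1 / 2) ^ k := by rw [← mul_pow]; norm_num
  calc (n : ℝ) ^ 2 * (2 ^ (k + 1) * r ^ (n / A))
      ≤ (A * B * (k + 1)) ^ 2 * (2 ^ (k + 1) * (1 / 4) ^ k) := by gcongr
    _ = C * (((k + 1 : ℕ) : ℝ) ^ 2 * (1 / 2) ^ (k + 1)) := by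
        rw [h4]; push_cast
        linear_combination (2 * (A * B) ^ 2 * ((k : ℝ) + 1) ^ 2 * (1 / 2) ^ k) * h2
    _ < 1 / 2 := hk₀ k hk

lemma KDense.exists_isRoutingSet_of_le_one {V : Type*} [Fintype V] [DecidableEq V]
    {G : SimpleGraph V} {X : Set V} {ε : ℝ} (hX : KDense G X (ε * Fintype.card V)) (hε0 : 0 < ε)
    (hε1 : ε ≤ 1) {L N : ℕ} (hL : 2 / ε + 1 ≤ L) (hn : 0 < Fintype.card V)
    (hfan : (Fintype.card V : ℝ) ^ 2 * (2 ^ (Fintype.card V / N + 1) *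
      (1 - (ε / 2) ^ L / 2) ^ (Fintype.card V / (L * L))) < 1 / 2) :
    ∃ R : Finset V, (#R : ℝ) ≤ ε * Fintype.card V ∧
      IsRoutingSet G X R L (Fintype.card V / N + 1) := by
  set n := Fintype.card V
  have hn' : (0 : ℝ) < n := by exact_mod_cast hn
  have hL0 : (0 : ℝ) < L := by linarith [show 0 < 2 / ε by positivity]
  have hLε : 2 ≤ ε * L := by
    have := (div_le_iff₀' hε0).1 (by linarith : 2 / ε ≤ L)
    linarith
  have hm : ((n / (L * L) : ℕ) : ℝ) * L ≤ ε * n / 2 := by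
    calc ((n / (L * L) : ℕ) : ℝ) * L ≤ (n / (L * L) : ℝ) * L := by
          gcongr; exact_mod_cast Nat.cast_div_le
      _ = n / L := by field_simp
      _ ≤ ε * n / 2 := by rw [div_le_iff₀ hL0]; nlinarith
  have hsize : ε / 2 * n / (⌊ε * n⌋₊ + 1) < 1 / 2 := by
    rw [div_lt_iff₀ (by positivity)]
    linarith [Nat.lt_floor_add_one (ε * n)]
  obtain ⟨R, hRK, hR⟩ := hX.exists_isRoutingSet (m := n / (L * L)) (s := n / N + 1)
    (K := ⌊ε * n⌋₊) (p := ε / 2) (mul_pos hε0 hn') (by positivity) (by linarith)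
    (by rwa [mul_div_mul_right _ _ hn'.ne']) hm (by linarith)
  exact ⟨R, (Nat.cast_le.2 hRK).trans (Nat.floor_le (by positivity)), hR⟩

theorem KDense.exists_linkage_of_le_one {ε : ℝ} (hε0 : 0 < ε) (hε1 : ε ≤ 1) :
    ∃ δ : ℝ, 0 < δ ∧ ∀ {V : Type} [Fintype V] [DecidableEq V] (G : SimpleGraph V) (X : Set V),
      KDense G X (ε * Fintype.card V) →
      ∃ R : Finset V, (#R : ℝ) ≤ ε * Fintype.card V ∧
        ∀ (t : ℕ) (p q : Fin t → V), (∀ i, p i ∉ X) → (∀ i, q i ∉ X) →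
          (t : ℝ) ≤ δ * Fintype.card V →
          ∃ P : ∀ i, G.Walk (p i) (q i), (∀ i, (P i).IsPath ∧ (P i).innerSupport ⊆ R) ∧
            Pairwise fun i j => Disjoint (P i).innerSupport (P j).innerSupport := by
  -- Fans have `n / (L * L)` paths of length at most `L`, a routing set keeps `n / N + 1` paths of
  -- every fan, and `δ` is small enough that `t` paths use fewer than that many vertices.
  set L := ⌈2 / ε⌉₊ + 1
  have hL : 2 / ε + 1 ≤ L := by simpa [L] using Nat.le_ceil (2 / ε)
  have hL0 : 0 < L := by positivity
  have hγ : (ε / 2) ^ L ≤ 1 := pow_le_one₀ (by positivity) (by linarith)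
  obtain ⟨B, k₀, hB, hk₀⟩ := exists_sq_mul_two_pow_mul_pow_lt (r := 1 - (ε / 2) ^ L / 2)
    (by linarith) (by linarith [pow_pos (by positivity : 0 < ε / 2) L]) (mul_pos hL0 hL0)
  set N := L * L * B
  have hN : 0 < N := by positivity
  refine ⟨((N * L * (k₀ + 1) : ℕ) : ℝ)⁻¹, by positivity, fun {V} _ _ G X hX => ?_⟩
  set n := Fintype.card V
  have ht (t : ℕ) (h : (t : ℝ) ≤ ((N * L * (k₀ + 1) : ℕ) : ℝ)⁻¹ * n) :
      t * L * (k₀ + 1) ≤ n / N := by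
    rw [Nat.le_div_iff_mul_le hN]
    rw [inv_mul_eq_div, le_div_iff₀ (by positivity)] at h
    exact_mod_cast (show ((t * L * (k₀ + 1) * N : ℕ) : ℝ) ≤ n by push_cast at h ⊢; linarith)
  by_cases hsmall : n / N ≤ k₀
  · refine ⟨∅, by simp; positivity, fun t p q _ _ hδ => ?_⟩
    obtain rfl : t = 0 := by
      by_contra ht0
      have := ht t hδ
      have : 1 ≤ t * L := Nat.one_le_iff_ne_zero.2 (mul_ne_zero ht0 hL0.ne')
      nlinarith
    exact ⟨fun i => i.elim0, fun i => i.elim0, fun i => i.elim0⟩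
  rw [not_le] at hsmall
  have hn : 0 < n := Nat.pos_of_ne_zero fun h => by simp [h] at hsmall
  obtain ⟨R, hR, hrouting⟩ := hX.exists_isRoutingSet_of_le_one hε0 hε1 hL hn (hk₀ n hsmall.le)
  refine ⟨R, hR, fun t p q hp hq hδ => hrouting.exists_paths ?_ p q hp hq⟩
  have := ht t hδ
  nlinarith

theorem linkage (ε : ℝ) (hε : 0 < ε) :
    ∃ δ : ℝ, 0 < δ ∧
      ∀ (V : Type) [Fintype V] (G : SimpleGraph V) (X : Set V),
        KDense G X (ε * (Fintype.card V : ℝ)) →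
        ∃ Z : Set V, (Z.ncard : ℝ) ≤ ε * (Fintype.card V : ℝ) ∧
          ∀ (t : ℕ) (p q : Fin t → V),
            Function.Injective (Sum.elim p q) →
            (∀ i, p i ∉ X ∪ Z) → (∀ i, q i ∉ X ∪ Z) →
            (t : ℝ) ≤ δ * (Fintype.card V : ℝ) →
            ∃ P : (i : Fin t) → G.Walk (p i) (q i),
              (∀ i, (P i).IsPath) ∧
              (∀ i, ∀ v ∈ (P i).support, v ≠ p i → v ≠ q i → v ∈ Z) ∧
              (∀ i j, i ≠ j →
                ∀ v ∈ (P i).support, v ≠ p i → v ≠ q i → v ∉ (P j).support) := by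
  classical
  obtain ⟨δ, hδ, hlink⟩ := KDense.exists_linkage_of_le_one (lt_min hε one_pos) (min_le_right ε 1)
  have hmin (V : Type) [Fintype V] : min ε 1 * Fintype.card V ≤ ε * Fintype.card V :=
    mul_le_mul_of_nonneg_right (min_le_left ε 1) (Nat.cast_nonneg _)
  refine ⟨δ, hδ, fun V _ G X hX => ?_⟩
  obtain ⟨R, hRcard, hR⟩ := hlink G X (hX.mono (hmin V))
  refine ⟨R, by rw [Set.ncard_coe_finset]; exact hRcard.trans (hmin V),
    fun t p q _ hp hq ht => ?_⟩
  obtain ⟨P, hP, hdisj⟩ := hR t p q (fun i hi => hp i (.inl hi)) (fun i hi => hq i (.inl hi)) ht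
  have hinner (i : Fin t) (v : V) (hv : v ∈ (P i).support) (hvp : v ≠ p i) (hvq : v ≠ q i) :
      v ∈ (P i).innerSupport :=
    Walk.mem_innerSupport.2 ⟨hv, hvp, hvq⟩
  refine ⟨P, fun i => (hP i).1, fun i v hv hvp hvq => (hP i).2 (hinner i v hv hvp hvq),
    fun i j hij v hv hvp hvq hvj => ?_⟩
  have hvR : v ∈ R := (hP i).2 (hinner i v hv hvp hvq)
  exact Finset.disjoint_left.1 (hdisj hij) (hinner i v hv hvp hvq)
    (hinner j v hvj (fun h => hp j (.inr (h ▸ hvR))) (fun h => hq j (.inr (h ▸ hvR))))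
end

section
/- For every positive integer s, there exists a graph G with minimum degree δ(G) ≥ (22/3)·s − 2 such that the disjoint union of s copies of the complete graph K₇ is not a minor of G. -/
open SimpleGraph

/-!
Take the complete 4-partite graph on `10s - 1` vertices with parts of size at most
`⌊(10s - 1)/4⌋ + 1`; every degree is then at least `22s/3 - 2`. In a complete multipartite
graph, two singleton branch sets of a clique model must lie in distinct parts, so a model of
`K₇` has at most 4 singleton branch sets and uses at least `4 + 2·3 = 10` vertices. Hence `s`
disjoint models of `K₇` need `10s` vertices, one more than the graph has.
-/

open Function

section Model

variable {α α' V W : Type*} {H : SimpleGraph α} {G : SimpleGraph V} {μ : α → Set V}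

lemma IsModel.nonempty (h : IsModel H G μ) (a : α) : (μ a).Nonempty :=
  Set.nonempty_coe_sort.mp (h.2.1 a).nonempty

lemma IsModel.comap (h : IsModel H G μ) {φ : α' → α} (hφ : Injective φ) :
    IsModel (H.comap φ) G (μ ∘ φ) :=
  ⟨fun _ _ hab => h.1 _ _ (hφ.ne hab), fun _ => h.2.1 _, fun _ _ hab => h.2.2 _ _ hab⟩

lemma IsModel.sum_ncard_le [Fintype α] [Finite V] (h : IsModel H G μ) :
    ∑ a, (μ a).ncard ≤ Nat.card V := by
  rw [← finsum_eq_sum_of_fintype,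
    ← Set.ncard_iUnion_of_finite (fun _ => Set.toFinite _) (fun a b hab => h.1 a b hab)]
  exact Set.ncard_le_card _

lemma IsModel.two_mul_card_le_sum_ncard_add [Fintype α] [Fintype W] [Finite V] {f : V → W}
    (h : IsModel (⊤ : SimpleGraph α) ((⊤ : SimpleGraph W).comap f) μ) :
    2 * Fintype.card α ≤ ∑ a, (μ a).ncard + Fintype.card W := by
  classical
  choose x hx using h.nonempty
  set S := Finset.univ.filter fun a => (μ a).ncard = 1
  have hS : S.card ≤ Fintype.card W := by
    refine Finset.card_le_card_of_injOn (fun a => f (x a)) (fun _ _ => Finset.mem_coe.2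
      (Finset.mem_univ _)) fun a ha b hb hab => ?_
    by_contra hne
    obtain ⟨a', ha', b', hb', hadj⟩ := h.2.2 a b hne
    have hsing : ∀ c ∈ S, ∀ y ∈ μ c, y = x c := fun c hc y hy =>
      (Set.ncard_le_one_iff (Set.toFinite _)).mp (Finset.mem_filter.mp hc).2.le hy (hx c)
    rw [hsing a ha a' ha', hsing b hb b' hb'] at hadj
    exact hadj hab
  have hcontrib : ∀ a, 2 ≤ (μ a).ncard + if a ∈ S then 1 else 0 := fun a => by
    have := (Set.ncard_pos (Set.toFinite _)).mpr (h.nonempty a)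
    split_ifs with ha
    · omega
    · have : (μ a).ncard ≠ 1 := fun h1 => ha (Finset.mem_filter.2 ⟨Finset.mem_univ a, h1⟩)
      omega
  calc 2 * Fintype.card α = ∑ _a : α, 2 := by simp [mul_comm]
    _ ≤ ∑ a, ((μ a).ncard + if a ∈ S then 1 else 0) :=
        Finset.sum_le_sum fun a _ => hcontrib a
    _ = ∑ a, (μ a).ncard + S.card := by rw [Finset.sum_add_distrib, Finset.sum_boole]; simp
    _ ≤ ∑ a, (μ a).ncard + Fintype.card W := by gcongr

lemma not_isMinor_disjointCliques_of_card_lt [Fintype W] [Finite V] {s n : ℕ} (f : V → W)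
    (hcard : Nat.card V < s * (2 * n - Fintype.card W)) :
    ¬ IsMinor (SimpleGraph.fromRel (fun p q : Fin s × Fin n => p.1 = q.1))
      ((⊤ : SimpleGraph W).comap f) := by
  rintro ⟨μ, hμ⟩
  have hcopy : ∀ i : Fin s, 2 * n - Fintype.card W ≤ ∑ j, (μ (i, j)).ncard := fun i => by
    have hclique : (SimpleGraph.fromRel fun p q : Fin s × Fin n => p.1 = q.1).comap
        (Prod.mk i) = ⊤ := by
      ext j k
      simp
    have := hμ.comap (Prod.mk_right_injective i)
    rw [hclique] at this
    have := this.two_mul_card_le_sum_ncard_add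
    simp only [Fintype.card_fin, comp_apply] at this
    omega
  have := calc
    s * (2 * n - Fintype.card W) = ∑ _i : Fin s, (2 * n - Fintype.card W) := by simp
    _ ≤ ∑ i : Fin s, ∑ j, (μ (i, j)).ncard := Finset.sum_le_sum fun i _ => hcopy i
    _ = ∑ p, (μ p).ncard := (Fintype.sum_prod_type fun p => (μ p).ncard).symm
    _ ≤ Nat.card V := hμ.sum_ncard_le
  omega

end Model

lemma deg_comap_top {V W : Type*} [Finite V] (f : V → W) (v : V) :
    deg ((⊤ : SimpleGraph W).comap f) v = Nat.card V - (f ⁻¹' {f v}).ncard := by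
  have : ((⊤ : SimpleGraph W).comap f).neighborSet v = (f ⁻¹' {f v})ᶜ := by
    ext u
    simp [eq_comm]
  rw [deg, this, Set.ncard_compl]

lemma ncard_setOf_mod_eq_le (N k r : ℕ) :
    {u : Fin N | (u : ℕ) % k = r}.ncard ≤ N / k + 1 := by
  calc {u : Fin N | (u : ℕ) % k = r}.ncard ≤ (Finset.range (N / k + 1) : Set ℕ).ncard := by
        refine Set.ncard_le_ncard_of_injOn (fun u => (u : ℕ) / k) (fun u _ => ?_) ?_
        · simpa [Nat.lt_succ_iff] using Nat.div_le_div_right u.isLt.le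
        · intro u hu v hv huv
          simp only [Set.mem_ofPred_eq] at hu hv huv
          ext
          rw [← Nat.div_add_mod u k, ← Nat.div_add_mod v k, huv, hu, hv]
    _ = N / k + 1 := by simp

theorem no_sK7_minor_large_min_degree (s : ℕ) (hs : 0 < s) :
    ∃ (N : ℕ) (G : SimpleGraph (Fin N)), 0 < N ∧
      (∀ v : Fin N, 22 / 3 * (s : ℝ) - 2 ≤ (deg G v : ℝ)) ∧
      ¬ IsMinor (SimpleGraph.fromRel (fun p q : Fin s × Fin 7 => p.1 = q.1)) G := by
  set N := 10 * s - 1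
  let f : Fin N → Fin 4 := fun u => Fin.ofNat 4 u
  refine ⟨N, (⊤ : SimpleGraph (Fin 4)).comap f, by omega, fun v => ?_,
    not_isMinor_disjointCliques_of_card_lt f (by rw [Nat.card_fin, Fintype.card_fin]; omega)⟩
  have hpart : (f ⁻¹' {f v}).ncard ≤ N / 4 + 1 := by
    convert ncard_setOf_mod_eq_le N 4 (v % 4) using 2
    ext u
    simp [f, Fin.ext_iff]
  have hdeg : 22 * s ≤ 3 * deg ((⊤ : SimpleGraph (Fin 4)).comap f) v + 6 := by
    rw [deg_comap_top, Nat.card_fin]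
    omega
  have : (22 * s : ℝ) ≤ 3 * deg ((⊤ : SimpleGraph (Fin 4)).comap f) v + 6 := by
    exact_mod_cast hdeg
  linarith
end

section
/- For all positive integers s, t and every ε > 0, there exists a graph G with density d(G) ≥ st − 1 + (t−1)/2 − ε such that the disjoint union of s copies of the complete bipartite graph K_{t,t} is not a minor of G. -/
open SimpleGraph

/-!
Take `G = K_a + m K_t` with `a = st - 1`: a clique `A` of `a` apex vertices joined to `m`
disjoint `t`-cliques. Its density is `a + (t - 1)/2 - O(1/m)`. Every component of `G - A` has
`t` vertices. In a model of `K_{t,t}` with fewer than `t` branch sets meeting `A`, some vertex on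
each side has a branch set avoiding `A`, and these two vertices are adjacent to all the others.
So all branch sets that avoid `A` lie in a single component of `G - A`. There are then at most
`t` of them, fewer than `2t` branch sets in all. Hence each of the `s` copies of
`K_{t,t}` in a model of `sK_{t,t}` has `t` branch sets meeting `A`, which needs `st > a` apex
vertices.
-/

open Finset

/-- With `a` apex vertices (`ℓ v = none`) and `m` label classes of size `t`, this is the
graph `K_a + m K_t`. -/
def apexBlockGraph {V κ : Type*} (ℓ : V → Option κ) : SimpleGraph V where
  Adj u v := u ≠ v ∧ (ℓ u = none ∨ ℓ v = none ∨ ℓ u = ℓ v)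
  symm := ⟨fun _ _ ⟨hne, h⟩ => ⟨hne.symm, by rcases h with h | h | h <;> simp [h]⟩⟩
  loopless := ⟨fun _ h => h.1 rfl⟩

theorem IsModel.comp {α α' β : Type*} {H : SimpleGraph α} {H' : SimpleGraph α'}
    {G : SimpleGraph β} {μ : α → Set β} (hμ : IsModel H G μ) (φ : H' →g H)
    (hφ : Function.Injective φ) : IsModel H' G (μ ∘ φ) :=
  ⟨fun _ _ huv => hμ.1 _ _ (hφ.ne huv), fun _ => hμ.2.1 _,
    fun _ _ huv => hμ.2.2 _ _ (φ.map_adj huv)⟩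

theorem Set.PairwiseDisjoint.ncard_le_of_inter_nonempty {ι V : Type*} {I : Set ι}
    {μ : ι → Set V} {S : Set V} (hdisj : I.PairwiseDisjoint μ)
    (hmeet : ∀ i ∈ I, (μ i ∩ S).Nonempty) (hI : I.Finite := by toFinite_tac)
    (hS : S.Finite := by toFinite_tac) : I.ncard ≤ S.ncard := by
  classical
  rw [Set.ncard_eq_toFinset_card I hI, Set.ncard_eq_toFinset_card S hS]
  refine Finset.card_le_card_of_forall_subsingleton (fun i v => v ∈ μ i) (fun i hi => ?_) ?_
  · obtain ⟨v, hv, hvS⟩ := hmeet i (by simpa using hi)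
    exact ⟨v, by simpa using hvS, hv⟩
  · intro v _ i ⟨hi, hvi⟩ j ⟨hj, hvj⟩
    by_contra hij
    exact Set.disjoint_left.mp (hdisj (by simpa using hi) (by simpa using hj) hij) hvi hvj

theorem SimpleGraph.Preconnected.apply_eq_of_adj {V κ : Type*} {G : SimpleGraph V}
    (hG : G.Preconnected) {f : V → κ} (hf : ∀ u v, G.Adj u v → f u = f v) (u v : V) :
    f u = f v := by
  obtain ⟨w⟩ := hG u v
  induction w with
  | nil => rfl
  | cons h _ ih => exact (hf _ _ h).trans ih

section Labelling

variable {V κ : Type*} {G : SimpleGraph V} {A : Set V} {f : V → κ}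

theorem IsModel.exists_subset_label {α β : Type*}
    {μ : α ⊕ β → Set V} (hμ : IsModel (completeBipartiteGraph α β) G μ)
    (hf : ∀ u v, G.Adj u v → u ∉ A → v ∉ A → f u = f v) {x : α} {y : β}
    (hx : ¬ (μ (.inl x) ∩ A).Nonempty) (hy : ¬ (μ (.inr y) ∩ A).Nonempty) :
    ∃ k, ∀ z, ¬ (μ z ∩ A).Nonempty → μ z ⊆ {v | v ∉ A ∧ f v = k} := by
  have hout : ∀ z, ¬ (μ z ∩ A).Nonempty → ∀ v ∈ μ z, v ∉ A :=
    fun z hz v hv hvA => hz ⟨v, hv, hvA⟩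
  have hne : ∀ z, (μ z).Nonempty := fun z => Set.nonempty_coe_sort.mp (hμ.2.1 z).nonempty
  have hconst : ∀ z, ¬ (μ z ∩ A).Nonempty → ∀ u ∈ μ z, ∀ v ∈ μ z, f u = f v :=
    fun z hz u hu v hv => (hμ.2.1 z).preconnected.apply_eq_of_adj (f := f ∘ Subtype.val)
      (fun a b hab => hf a b hab (hout z hz a a.2) (hout z hz b b.2)) ⟨u, hu⟩ ⟨v, hv⟩
  have hlink : ∀ z z', ¬ (μ z ∩ A).Nonempty → ¬ (μ z' ∩ A).Nonempty →
      (completeBipartiteGraph α β).Adj z z' → ∀ u ∈ μ z, ∀ v ∈ μ z', f u = f v := by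
    intro z z' hz hz' hzz' u hu v hv
    obtain ⟨a, ha, b, hb, hab⟩ := hμ.2.2 z z' hzz'
    rw [hconst z hz u hu a ha, hf a b hab (hout z hz a ha) (hout z' hz' b hb),
      hconst z' hz' b hb v hv]
  obtain ⟨w, hw⟩ := hne (.inl x)
  obtain ⟨w', hw'⟩ := hne (.inr y)
  refine ⟨f w, fun z hz v hv => ⟨hout z hz v hv, ?_⟩⟩
  cases z with
  | inl x' => rw [hlink _ _ hz hy (by simp) v hv w' hw', hlink _ _ hx hy (by simp) w hw w' hw']
  | inr y' => exact (hlink _ _ hx hz (by simp) w hw v hv).symm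

theorem IsModel.le_ncard_inter_nonempty [Finite V] {t : ℕ} {μ : Fin t ⊕ Fin t → Set V}
    (hμ : IsModel (completeBipartiteGraph (Fin t) (Fin t)) G μ)
    (hf : ∀ u v, G.Adj u v → u ∉ A → v ∉ A → f u = f v)
    (hfib : ∀ k, {v | v ∉ A ∧ f v = k}.ncard ≤ t) :
    t ≤ {z | (μ z ∩ A).Nonempty}.ncard := by
  set K := {z | (μ z ∩ A).Nonempty}
  by_contra! hK
  obtain ⟨_, ⟨x, rfl⟩, hx⟩ := Set.exists_mem_notMem_of_ncard_lt_ncard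
    (hK.trans_eq (by simp [Set.ncard_range_of_injective Sum.inl_injective]) :
      K.ncard < (Set.range (Sum.inl : Fin t → Fin t ⊕ Fin t)).ncard)
  obtain ⟨_, ⟨y, rfl⟩, hy⟩ := Set.exists_mem_notMem_of_ncard_lt_ncard
    (hK.trans_eq (by simp [Set.ncard_range_of_injective Sum.inr_injective]) :
      K.ncard < (Set.range (Sum.inr : Fin t → Fin t ⊕ Fin t)).ncard)
  obtain ⟨k, hk⟩ := hμ.exists_subset_label hf hx hy
  have hKc : Kᶜ.ncard ≤ t := by
    refine le_trans ?_ (hfib k)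
    refine Set.PairwiseDisjoint.ncard_le_of_inter_nonempty (fun z _ z' _ h => hμ.1 z z' h) ?_
    intro z hz
    obtain ⟨v, hv⟩ := Set.nonempty_coe_sort.mp (hμ.2.1 z).nonempty
    exact ⟨v, hv, hk z hz hv⟩
  have hsum := Set.ncard_add_ncard_compl K
  simp only [Nat.card_eq_fintype_card, Fintype.card_sum, Fintype.card_fin] at hsum
  omega

end Labelling

/-- `sK_{t,t}` for `ι = Fin s`. -/
def copiesCompleteBipartite (ι : Type*) (t : ℕ) : SimpleGraph (ι × (Fin t ⊕ Fin t)) :=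
  SimpleGraph.fromRel fun p q => p.1 = q.1 ∧ p.2.isLeft ∧ q.2.isRight

def copiesCompleteBipartite.inclusion {ι : Type*} (t : ℕ) (i : ι) :
    completeBipartiteGraph (Fin t) (Fin t) →g copiesCompleteBipartite ι t where
  toFun z := (i, z)
  map_rel' := by
    rintro (_ | _) (_ | _) h <;> simp_all [copiesCompleteBipartite]

theorem not_isMinor_copiesCompleteBipartite {ι V κ : Type*} [Fintype ι] [Finite V]
    {G : SimpleGraph V} {A : Set V} {f : V → κ} {t : ℕ}
    (hf : ∀ u v, G.Adj u v → u ∉ A → v ∉ A → f u = f v)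
    (hfib : ∀ k, {v | v ∉ A ∧ f v = k}.ncard ≤ t) (hA : A.ncard < Fintype.card ι * t) :
    ¬ IsMinor (copiesCompleteBipartite ι t) G := by
  classical
  rintro ⟨μ, hμ⟩
  have hcopy (i : ι) : t ≤ {z | (μ (i, z) ∩ A).Nonempty}.ncard :=
    (hμ.comp (copiesCompleteBipartite.inclusion t i)
      fun _ _ h => (Prod.ext_iff.mp h).2).le_ncard_inter_nonempty hf hfib
  have hmeet : {p | (μ p ∩ A).Nonempty}.ncard ≤ A.ncard :=
    Set.PairwiseDisjoint.ncard_le_of_inter_nonempty (fun p _ q _ h => hμ.1 p q h) fun _ hp => hp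
  have hsum :
      {p | (μ p ∩ A).Nonempty}.ncard = ∑ i, {z | (μ (i, z) ∩ A).Nonempty}.ncard := by
    simp only [Set.ncard_eq_toFinset_card', Set.toFinset_ofPred, Finset.card_filter,
      Fintype.sum_prod_type]
  have := Finset.card_nsmul_le_sum Finset.univ _ t fun i _ => hcopy i
  simp only [Finset.card_univ, smul_eq_mul] at this
  omega

namespace apexBlockGraph

variable {V κ : Type*} {ℓ : V → Option κ}

@[simp]
theorem adj_iff {u v : V} :
    (apexBlockGraph ℓ).Adj u v ↔ u ≠ v ∧ (ℓ u = none ∨ ℓ v = none ∨ ℓ u = ℓ v) :=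
  Iff.rfl

variable [Fintype V] [DecidableEq κ]

theorem not_isMinor_copiesCompleteBipartite {ι : Type*} [Fintype ι] {t : ℕ}
    (ha : #{v | ℓ v = none} < Fintype.card ι * t) (ht : ∀ k, #{v | ℓ v = some k} ≤ t) :
    ¬ IsMinor (copiesCompleteBipartite ι t) (apexBlockGraph ℓ) := by
  refine _root_.not_isMinor_copiesCompleteBipartite (A := {v | ℓ v = none}) (f := ℓ)
    ?_ ?_ ?_
  · rintro u v ⟨-, h⟩ hu hv
    tauto
  · rintro (_ | k)
    · simp
    · calc _ ≤ {v | ℓ v = some k}.ncard := Set.ncard_le_ncard fun v hv => hv.2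
        _ ≤ t := by rw [Set.ncard_eq_toFinset_card', Set.toFinset_ofPred]; exact ht k
  · rwa [Set.ncard_eq_toFinset_card', Set.toFinset_ofPred]

variable [DecidableEq V]

instance : DecidableRel (apexBlockGraph ℓ).Adj := fun _ _ => decidable_of_iff' _ adj_iff

theorem degree_add_one_of_eq_none {v : V} (hv : ℓ v = none) :
    (apexBlockGraph ℓ).degree v + 1 = Fintype.card V := by
  have : (apexBlockGraph ℓ).neighborFinset v = univ.erase v := by
    ext u
    simp [hv, eq_comm]
  rw [← card_neighborFinset_eq_degree, this, card_erase_add_one (mem_univ v), card_univ]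

theorem degree_add_one_of_eq_some {v : V} {k : κ} (hv : ℓ v = some k) :
    (apexBlockGraph ℓ).degree v + 1 = #{u | ℓ u = none} + #{u | ℓ u = some k} := by
  have : (apexBlockGraph ℓ).neighborFinset v =
      (univ.filter (ℓ · = none) ∪ univ.filter (ℓ · = some k)).erase v := by
    ext u
    simp [hv, eq_comm]
  rw [← card_neighborFinset_eq_degree, this, card_erase_add_one (by simp [hv]),
    card_union_of_disjoint (disjoint_filter.mpr fun _ _ h => by simp [h])]

theorem two_mul_card_edgeFinset_add_card {a t : ℕ} (ha : #{v | ℓ v = none} = a)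
    (ht : ∀ k, #{v | ℓ v = some k} = t) :
    2 * #(apexBlockGraph ℓ).edgeFinset + Fintype.card V =
      a * Fintype.card V + (Fintype.card V - a) * (a + t) := by
  have hblock : ∀ v ∈ univ.filter (ℓ · ≠ none), (apexBlockGraph ℓ).degree v + 1 = a + t := by
    intro v hv
    obtain ⟨k, hk⟩ := Option.ne_none_iff_exists'.mp (mem_filter.mp hv).2
    rw [degree_add_one_of_eq_some hk, ha, ht]
  have hcard : #{v | ℓ v ≠ none} = Fintype.card V - a := by
    have := card_filter_add_card_filter_not (s := univ) (ℓ · = none)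
    simp only [ha, card_univ, ne_eq] at this ⊢
    omega
  calc 2 * #(apexBlockGraph ℓ).edgeFinset + Fintype.card V
      = ∑ v, ((apexBlockGraph ℓ).degree v + 1) := by
        rw [sum_add_distrib, sum_degrees_eq_twice_card_edges, sum_const, card_univ, smul_eq_mul,
          mul_one]
    _ = ∑ v ∈ univ.filter (ℓ · = none), ((apexBlockGraph ℓ).degree v + 1) +
        ∑ v ∈ univ.filter (ℓ · ≠ none), ((apexBlockGraph ℓ).degree v + 1) :=
        (sum_filter_add_sum_filter_not _ _ _).symm
    _ = a * Fintype.card V + (Fintype.card V - a) * (a + t) := by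
        rw [sum_congr rfl fun v hv => degree_add_one_of_eq_none (mem_filter.mp hv).2,
          sum_congr rfl hblock, sum_const, sum_const, ha, hcard, smul_eq_mul, smul_eq_mul]

theorem density_eq [Nonempty V] {a t : ℕ} (ha : #{v | ℓ v = none} = a)
    (ht : ∀ k, #{v | ℓ v = some k} = t) :
    density (apexBlockGraph ℓ) = a + (t - 1) / 2 - a * (a + t) / (2 * Fintype.card V) := by
  have hedges := congrArg (Nat.cast : ℕ → ℝ) (two_mul_card_edgeFinset_add_card ha ht)
  have haN : a ≤ Fintype.card V := ha ▸ card_le_univ _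
  have hN : (0 : ℝ) < Fintype.card V := by exact_mod_cast Fintype.card_pos
  push_cast [Nat.cast_sub haN] at hedges
  rw [density, Nat.card_eq_fintype_card, ← coe_edgeFinset, Set.ncard_coe_finset]
  field_simp
  linarith

end apexBlockGraph

def apexBlockLabel (a m t : ℕ) (v : Fin (a + m * t)) : Option (Fin m) :=
  (finSumFinEquiv.symm v).elim (fun _ => none) fun w => some (finProdFinEquiv.symm w).1

theorem card_apexBlockLabel_eq_none (a m t : ℕ) :
    #{v | apexBlockLabel a m t v = none} = a := by
  rw [card_filter, Fin.sum_univ_add]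
  simp [apexBlockLabel]

theorem card_apexBlockLabel_eq_some (a m t : ℕ) (k : Fin m) :
    #{v | apexBlockLabel a m t v = some k} = t := by
  rw [card_filter, Fin.sum_univ_add, Fintype.sum_equiv finProdFinEquiv.symm _
    (fun p : Fin m × Fin t => if p.1 = k then 1 else 0) (fun _ => by simp [apexBlockLabel]),
    Fintype.sum_prod_type_right]
  simp [apexBlockLabel]

theorem no_sKtt_minor_large_density (s t : ℕ) (hs : 0 < s) (ht : 0 < t)
    (ε : ℝ) (hε : 0 < ε) :
    ∃ (N : ℕ) (G : SimpleGraph (Fin N)), 0 < N ∧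
      (s : ℝ) * (t : ℝ) - 1 + ((t : ℝ) - 1) / 2 - ε ≤ density G ∧
      ¬ IsMinor (SimpleGraph.fromRel
        (fun p q : Fin s × (Fin t ⊕ Fin t) =>
          p.1 = q.1 ∧ p.2.isLeft ∧ q.2.isRight)) G := by
  set a := s * t - 1
  have hst : 0 < s * t := Nat.mul_pos hs ht
  obtain ⟨m, hm⟩ := exists_nat_ge ((a : ℝ) * (a + t) / (2 * ε))
  have hN : 0 < a + (m + 1) * t := by positivity
  refine ⟨a + (m + 1) * t, apexBlockGraph (apexBlockLabel a (m + 1) t), hN, ?_,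
    apexBlockGraph.not_isMinor_copiesCompleteBipartite
      (by rw [card_apexBlockLabel_eq_none, Fintype.card_fin]; omega)
      fun k => (card_apexBlockLabel_eq_some a (m + 1) t k).le⟩
  have : Nonempty (Fin (a + (m + 1) * t)) := ⟨⟨0, hN⟩⟩
  rw [apexBlockGraph.density_eq (card_apexBlockLabel_eq_none _ _ _)
    (card_apexBlockLabel_eq_some _ _ _), Fintype.card_fin]
  have ha : (a : ℝ) = s * t - 1 := by rw [Nat.cast_sub hst, Nat.cast_mul, Nat.cast_one]
  have hmN : (m : ℝ) ≤ ((a + (m + 1) * t : ℕ) : ℝ) := by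
    exact_mod_cast (by nlinarith : m ≤ a + (m + 1) * t)
  have herr : (a : ℝ) * (a + t) / (2 * ((a + (m + 1) * t : ℕ) : ℝ)) ≤ ε := by
    rw [div_le_iff₀ (by positivity)]
    rw [div_le_iff₀ (by positivity)] at hm
    nlinarith
  linarith
end

section
/- For every integer Δ ≥ 3 and every graph H, there exists a bipartite graph H′ with maximum degree Δ(H′) ≤ Δ and |V(H′)| ≤ 4|E(H)|/(Δ−2) + 2|V(H)| such that H is a minor of H′. -/
open SimpleGraph

/-!
Replace every vertex `v` of `H` by a path `P_v` on `2 (⌊deg v / (Δ - 2)⌋ + 1)` vertices and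
attach the edges of `H` at `v` to the path in blocks of at most `Δ - 2`, block `j` going to
position `2j` or `2j + 1`. Every path vertex then has at most two path neighbours and `Δ - 2`
other neighbours, and contracting each path recovers `H`. Orienting each edge `vw` by a linear
order on `V(H)`, the smaller endpoint uses even positions and the larger odd ones, so every edge
of the new graph joins positions of different parity: the parity of the position is a proper
`2`-colouring. Summing `2 (deg v / (Δ - 2) + 1)` over `v` gives the bound on the order.
-/

open SimpleGraph

theorem SimpleGraph.Iso.deg_apply {V W : Type*} {G : SimpleGraph V} {G' : SimpleGraph W}
    (e : G ≃g G') (v : V) : deg G' (e v) = deg G v := by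
  rw [deg, deg, ← e.image_neighborSet, Set.ncard_image_of_injective _ e.injective]

theorem IsMinor.map {α V W : Type*} {H : SimpleGraph α} {G : SimpleGraph V} {G' : SimpleGraph W}
    (f : G ↪g G') : IsMinor H G → IsMinor H G' := by
  rintro ⟨μ, hdisj, hconn, hadj⟩
  refine ⟨fun v => f '' μ v, fun u v huv => ?_, fun v => ?_, fun u v huv => ?_⟩
  · exact Set.disjoint_image_of_injective f.injective (hdisj u v huv)
  · refine (hconn v).map (induceHom f.toHom (Set.mapsTo_image f (μ v))) ?_
    rintro ⟨_, a, ha, rfl⟩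
    exact ⟨⟨a, ha⟩, rfl⟩
  · obtain ⟨a, ha, b, hb, hab⟩ := hadj u v huv
    exact ⟨f a, Set.mem_image_of_mem f ha, f b, Set.mem_image_of_mem f hb, f.map_adj_iff.2 hab⟩

section PathBlowup

variable {α : Type*} (H : SimpleGraph α) (len : α → ℕ) (pos : α → α → ℕ)

def pathBlowup : SimpleGraph (Σ v, Fin (len v)) where
  Adj x y := (x.1 = y.1 ∧ (x.2.val + 1 = y.2.val ∨ y.2.val + 1 = x.2.val)) ∨
    (H.Adj x.1 y.1 ∧ x.2.val = pos x.1 y.1 ∧ y.2.val = pos y.1 x.1)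
  symm := ⟨by
    rintro x y (⟨h, hxy⟩ | ⟨h, hx, hy⟩)
    · exact Or.inl ⟨h.symm, hxy.symm⟩
    · exact Or.inr ⟨h.symm, hy, hx⟩⟩
  loopless := ⟨by
    rintro x (⟨_, h⟩ | ⟨h, _⟩)
    · omega
    · exact H.irrefl h⟩

variable {H len pos}

theorem pathBlowup_induce_fiber_connected {v : α} (hv : 0 < len v) :
    ((pathBlowup H len pos).induce {x | x.1 = v}).Connected := by
  let toFiber : pathGraph (len v) →g (pathBlowup H len pos).induce {x | x.1 = v} :=
    { toFun := fun i => ⟨⟨v, i⟩, rfl⟩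
      map_rel' := fun h => Or.inl ⟨rfl, pathGraph_adj.1 h⟩ }
  have hsurj : Function.Surjective toFiber := by
    rintro ⟨⟨_, i⟩, rfl⟩
    exact ⟨i, rfl⟩
  rw [connected_iff]
  exact ⟨(pathGraph_preconnected _).map toFiber hsurj, ⟨toFiber ⟨0, hv⟩⟩⟩

theorem isMinor_pathBlowup (hlen : ∀ v, 0 < len v)
    (hpos : ∀ v w, H.Adj v w → pos v w < len v) : IsMinor H (pathBlowup H len pos) := by
  refine ⟨fun v => {x | x.1 = v}, fun u v huv => ?_, fun v => ?_, fun u v huv => ?_⟩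
  · exact Set.disjoint_left.2 fun x hu hv => huv (hu.symm.trans hv)
  · exact pathBlowup_induce_fiber_connected (hlen v)
  · exact ⟨⟨u, pos u v, hpos u v huv⟩, rfl, ⟨v, pos v u, hpos v u huv.symm⟩, rfl,
      Or.inr ⟨huv, rfl, rfl⟩⟩

theorem pathBlowup_colorable_two (hpar : ∀ v w, H.Adj v w → pos v w % 2 ≠ pos w v % 2) :
    (pathBlowup H len pos).Colorable 2 := by
  refine ⟨Coloring.mk (fun x => ⟨x.2.val % 2, Nat.mod_lt _ two_pos⟩) ?_⟩
  rintro x y (⟨_, hxy⟩ | ⟨h, hx, hy⟩) hcol <;> rw [Fin.mk.injEq] at hcol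
  · omega
  · rw [hx, hy] at hcol
    exact hpar _ _ h hcol

theorem deg_pathBlowup_le [Finite α] {c : ℕ}
    (hcap : ∀ v i, {w | H.Adj v w ∧ pos v w = i}.ncard ≤ c) (x : Σ v, Fin (len v)) :
    deg (pathBlowup H len pos) x ≤ c + 2 := by
  set along : Set (Σ v, Fin (len v)) :=
    {y | y.1 = x.1 ∧ (y.2.val = x.2.val + 1 ∨ y.2.val + 1 = x.2.val)}
  set across : Set (Σ v, Fin (len v)) :=
    {y | H.Adj x.1 y.1 ∧ x.2.val = pos x.1 y.1 ∧ y.2.val = pos y.1 x.1}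
  have hsub : (pathBlowup H len pos).neighborSet x ⊆ along ∪ across := by
    rintro y (⟨h, hxy⟩ | h)
    · exact Or.inl ⟨h.symm, by omega⟩
    · exact Or.inr h
  have halong : along.ncard ≤ 2 := by
    refine (Set.ncard_le_ncard_of_injOn (fun y => y.2.val) ?_ ?_).trans
      ((Set.ncard_insert_le (x.2.val + 1) {x.2.val - 1}).trans_eq (by simp))
    · rintro y ⟨-, hy⟩
      simp only [Set.mem_insert_iff, Set.mem_singleton_iff]
      omega
    · rintro ⟨a, i⟩ ⟨rfl, -⟩ ⟨b, j⟩ ⟨rfl, -⟩ hij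
      exact congrArg _ (Fin.ext hij)
  have hacross : across.ncard ≤ c := by
    refine (Set.ncard_le_ncard_of_injOn Sigma.fst ?_ ?_).trans (hcap x.1 x.2.val)
    · rintro y ⟨h, hx, -⟩
      exact ⟨h, hx.symm⟩
    · rintro ⟨a, i⟩ ⟨-, -, hi⟩ ⟨b, j⟩ ⟨-, -, hj⟩ (rfl : a = b)
      exact congrArg _ (Fin.ext (hi.trans hj.symm))
  calc deg (pathBlowup H len pos) x ≤ (along ∪ across).ncard := Set.ncard_le_ncard hsub
    _ ≤ along.ncard + across.ncard := Set.ncard_union_le _ _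
    _ ≤ c + 2 := by omega

end PathBlowup

section Ports

variable {α : Type*} [Fintype α] (H : SimpleGraph α) [DecidableRel H.Adj] (k : ℕ)

noncomputable def blockLen (v : α) : ℕ := 2 * (H.degree v / k + 1)

theorem sum_blockLen_le :
    (∑ v, blockLen H k v : ℝ) ≤ 4 * H.edgeSet.ncard / k + 2 * Fintype.card α := by
  have hterm : ∀ v, (blockLen H k v : ℝ) ≤ 2 * H.degree v / k + 2 := fun v => by
    have : ((H.degree v / k : ℕ) : ℝ) ≤ H.degree v / k := Nat.cast_div_le
    unfold blockLen
    push_cast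
    linarith [mul_div_assoc (2 : ℝ) (H.degree v : ℝ) k]
  have hdeg : (∑ v, (H.degree v : ℝ)) = 2 * H.edgeSet.ncard := by
    rw [← coe_edgeFinset, Set.ncard_coe_finset]
    exact_mod_cast sum_degrees_eq_twice_card_edges H
  calc (∑ v, blockLen H k v : ℝ) ≤ ∑ v, (2 * H.degree v / k + 2 : ℝ) :=
        Finset.sum_le_sum fun v _ => hterm v
    _ = 4 * H.edgeSet.ncard / k + 2 * Fintype.card α := by
        rw [Finset.sum_add_distrib, ← Finset.sum_div, ← Finset.mul_sum, hdeg]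
        simp only [Finset.sum_const, Finset.card_univ, nsmul_eq_mul]
        ring

variable [LinearOrder α]

noncomputable def portIndex (v w : α) : ℕ := (H.neighborFinset v).toList.idxOf w

noncomputable def port (v w : α) : ℕ := 2 * (portIndex H v w / k) + if v < w then 0 else 1

variable {H}

theorem portIndex_lt_degree {v w : α} (h : H.Adj v w) : portIndex H v w < H.degree v := by
  rw [← card_neighborFinset_eq_degree, ← Finset.length_toList]
  exact List.idxOf_lt_length_iff.2 (by simpa using h)

theorem portIndex_injOn (v : α) : Set.InjOn (portIndex H v) (H.neighborSet v) :=
  fun _ hw _ _ => (List.idxOf_inj (by simpa using hw)).1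

theorem port_lt_blockLen {v w : α} (h : H.Adj v w) : port H k v w < blockLen H k v := by
  have : portIndex H v w / k ≤ H.degree v / k :=
    Nat.div_le_div_right (portIndex_lt_degree h).le
  unfold port blockLen
  split <;> omega

theorem port_mod_two_ne {v w : α} (h : v ≠ w) : port H k v w % 2 ≠ port H k w v % 2 := by
  unfold port
  rcases h.lt_or_gt with hvw | hwv
  · rw [if_pos hvw, if_neg hvw.not_gt]; omega
  · rw [if_neg hwv.not_gt, if_pos hwv]; omega

variable {k} in
theorem ncard_port_eq_le (hk : 0 < k) (v : α) (i : ℕ) :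
    {w | H.Adj v w ∧ port H k v w = i}.ncard ≤ k := by
  have hblock : ∀ w ∈ {w | H.Adj v w ∧ port H k v w = i},
      portIndex H v w ∈ Finset.Ico (k * (i / 2)) (k * (i / 2) + k) := by
    rintro w ⟨-, hw⟩
    have hdiv : portIndex H v w / k = i / 2 := by unfold port at hw; split at hw <;> omega
    have hsplit := Nat.div_add_mod (portIndex H v w) k
    have := Nat.mod_lt (portIndex H v w) hk
    rw [hdiv] at hsplit
    rw [Finset.mem_Ico]
    omega
  calc _ ≤ (Finset.Ico (k * (i / 2)) (k * (i / 2) + k) : Set ℕ).ncard :=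
        Set.ncard_le_ncard_of_injOn _ hblock
          ((portIndex_injOn v).mono fun _ hw => hw.1)
    _ = k := by rw [Set.ncard_coe_finset, Nat.card_Ico]; omega

end Ports

theorem bipartite_bounded_degree_host (Δ : ℕ) (hΔ : 3 ≤ Δ)
    (α : Type) [Fintype α] (H : SimpleGraph α) :
    ∃ (m : ℕ) (H' : SimpleGraph (Fin m)),
      H'.Colorable 2 ∧ (∀ v, deg H' v ≤ Δ) ∧
      (m : ℝ) ≤ 4 * (H.edgeSet.ncard : ℝ) / ((Δ : ℝ) - 2) + 2 * (Fintype.card α : ℝ) ∧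
      IsMinor H H' := by
  classical
  let _ : LinearOrder α := LinearOrder.lift' _ (Fintype.equivFin α).injective
  let G := pathBlowup H (blockLen H (Δ - 2)) (port H (Δ - 2))
  let e := G.overFinIso rfl
  refine ⟨_, G.overFin rfl, ?_, fun x => ?_, ?_, ?_⟩
  · exact (pathBlowup_colorable_two fun v w h => port_mod_two_ne _ h.ne).of_hom e.symm.toHom
  · rw [← e.apply_symm_apply x, e.deg_apply]
    exact (deg_pathBlowup_le (ncard_port_eq_le (by omega)) _).trans_eq (by omega)
  · have hΔ2 : ((Δ - 2 : ℕ) : ℝ) = Δ - 2 := by rw [Nat.cast_sub (by omega)]; rfl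
    simpa [Fintype.card_sigma, hΔ2] using sum_blockLen_le H (Δ - 2)
  · have hminor : IsMinor H G :=
      isMinor_pathBlowup (fun v => by simp [blockLen]) fun v w h => port_lt_blockLen _ h
    exact hminor.map e.toEmbedding
end
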